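/- arXiv:2211.02037 — 9 statements merged into one kernel-verified Lean document; each statement's English description precedes it below -/
import Mathlib

section
/- If U is a unitary matrix with spectral decomposition U = Σ_r λ_r F_r (distinct eigenvalues λ_r, orthogonal spectral projections F_r), then for any unit vector v, the Cesàro time average (1/T) Σ_{t=0}^{T-1} (U^t v) ∘ conj(U^t v) converges as T → ∞ to Σ_r (F_r v) ∘ conj(F_r v), where ∘ denotes the entrywise (Hadamard) product. -/
open Matrix BigOperators Filter Finset

/-!
Because the `F r` are complete orthogonal idempotents, `U ^ t = ∑ r, λ_r ^ t • F r`, so each entry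
of `(U^t v) ∘ conj (U^t v)` is `∑ r s, (λ_r conj λ_s) ^ t (F_r v)_i conj (F_s v)_i`. For `‖μ‖ ≤ 1`
the Cesàro mean of `μ ^ t` tends to `1` if `μ = 1` and to `0` otherwise (the geometric sums stay
bounded), and for distinct eigenvalues of modulus one `λ_r conj λ_s = 1` exactly when `r = s`, so
only the diagonal terms survive.
-/

theorem CompleteOrthogonalIdempotents.sum_smul_pow {R A ι : Type*} [CommSemiring R] [Semiring A]
    [Algebra R A] [Fintype ι] {e : ι → A} (he : CompleteOrthogonalIdempotents e) (c : ι → R)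
    (n : ℕ) : (∑ i, c i • e i) ^ n = ∑ i, c i ^ n • e i := by
  classical
  induction n with
  | zero => simp [he.complete]
  | succ n ih =>
    simp [pow_succ, ih, sum_mul_sum, he.mul_eq, smul_smul, mul_comm]

section Cesaro

variable {𝕜 : Type*} [RCLike 𝕜]

theorem tendsto_cesaro_pow {μ : 𝕜} (hμ : ‖μ‖ ≤ 1) :
    Tendsto (fun T : ℕ => (T : 𝕜)⁻¹ * ∑ t ∈ range T, μ ^ t) atTop
      (nhds (if μ = 1 then 1 else 0)) := by
  by_cases h : μ = 1
  · simp only [h, if_true, one_pow, sum_const, card_range, nsmul_eq_mul, mul_one]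
    refine tendsto_const_nhds.congr' ?_
    filter_upwards [eventually_ne_atTop 0] with T hT
    exact (inv_mul_cancel₀ (Nat.cast_ne_zero.mpr hT)).symm
  · rw [if_neg h]
    have hbound (T : ℕ) : ‖∑ t ∈ range T, μ ^ t‖ ≤ 2 / ‖μ - 1‖ := by
      rw [geom_sum_eq h, norm_div]
      gcongr
      calc ‖μ ^ T - 1‖ ≤ ‖μ‖ ^ T + 1 := by simpa using norm_sub_le (μ ^ T) 1
        _ ≤ 2 := by linarith [pow_le_one₀ (norm_nonneg μ) hμ (n := T)]
    have hinv : Tendsto (fun T : ℕ => (T : ℝ)⁻¹ * (2 / ‖μ - 1‖)) atTop (nhds 0) := by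
      simpa using (tendsto_inv_atTop_zero.comp tendsto_natCast_atTop_atTop).mul_const (2 / ‖μ - 1‖)
    refine squeeze_zero_norm (fun T => ?_) hinv
    rw [norm_mul, norm_inv, RCLike.norm_natCast]
    exact mul_le_mul_of_nonneg_left (hbound T) (by positivity)

theorem tendsto_cesaro_sum_mul_pow {ι : Type*} [Fintype ι] (c μ : ι → 𝕜)
    (hμ : ∀ k, ‖μ k‖ ≤ 1) :
    Tendsto (fun T : ℕ => (T : 𝕜)⁻¹ * ∑ t ∈ range T, ∑ k, c k * μ k ^ t) atTop
      (nhds (∑ k, if μ k = 1 then c k else 0)) := by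
  have hterm (k : ι) : Tendsto (fun T : ℕ => c k * ((T : 𝕜)⁻¹ * ∑ t ∈ range T, μ k ^ t)) atTop
      (nhds (if μ k = 1 then c k else 0)) := by
    simpa only [mul_ite, mul_one, mul_zero] using (tendsto_cesaro_pow (hμ k)).const_mul (c k)
  refine (tendsto_finsetSum univ fun k _ => hterm k).congr fun T => ?_
  simp only [sum_comm (s := range T), mul_sum]
  exact sum_congr rfl fun k _ => sum_congr rfl fun t _ => by ring

end Cesaro

theorem cesaro_average_of_unitary_general
    (N m : ℕ)
    (U : Matrix (Fin N) (Fin N) ℂ)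
    (lam : Fin m → ℂ)
    (hlam_mod : ∀ r, ‖lam r‖ = 1)
    (hlam_inj : Function.Injective lam)
    (F : Fin m → Matrix (Fin N) (Fin N) ℂ)
    (hdecomp : U = ∑ r, lam r • F r)
    (horth : ∀ r s, r ≠ s → F r * F s = 0)
    (hsum : ∑ r, F r = 1)
    (v : Fin N → ℂ) :
    Tendsto
      (fun T : ℕ => fun i : Fin N =>
        (T : ℂ)⁻¹ * ∑ t ∈ Finset.range T,
          ((U ^ t).mulVec v i * star ((U ^ t).mulVec v i)))
      atTop
      (nhds (fun i : Fin N => ∑ r, ((F r).mulVec v i * star ((F r).mulVec v i)))) := by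
  have hF : CompleteOrthogonalIdempotents F :=
    CompleteOrthogonalIdempotents.iff_ortho_complete.mpr ⟨horth, hsum⟩
  have hdiag (r s : Fin m) : lam r * star (lam s) = 1 ↔ r = s := by
    rw [RCLike.star_def, ← RCLike.inv_eq_conj (hlam_mod s),
      mul_inv_eq_one₀ (norm_ne_zero_iff.mp (by simp [hlam_mod])), hlam_inj.eq_iff]
  rw [tendsto_pi_nhds]
  intro i
  have hexpand (t : ℕ) : (U ^ t).mulVec v i * star ((U ^ t).mulVec v i) =
      ∑ p : Fin m × Fin m, ((F p.1).mulVec v i * star ((F p.2).mulVec v i)) *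
        (lam p.1 * star (lam p.2)) ^ t := by
    simp only [hdecomp, hF.sum_smul_pow, sum_mulVec, Finset.sum_apply, smul_mulVec, Pi.smul_apply,
      smul_eq_mul, star_sum, star_mul', star_pow, sum_mul_sum, Fintype.sum_prod_type]
    exact sum_congr rfl fun r _ => sum_congr rfl fun s _ => by ring
  have hlim := tendsto_cesaro_sum_mul_pow
    (fun p : Fin m × Fin m => (F p.1).mulVec v i * star ((F p.2).mulVec v i))
    (fun p => lam p.1 * star (lam p.2)) (fun p => by simp [hlam_mod])
  simpa only [hexpand, hdiag, Fintype.sum_prod_type, sum_ite_eq, mem_univ, if_true] using hlim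

/-- For a unitary `U` with spectral decomposition `U = Σ_r λ_r F_r`
(distinct unit-modulus eigenvalues, orthogonal spectral projections), and any unit
vector `v`, the Cesàro average `(1/T) Σ_{t<T} (U^t v) ∘ conj(U^t v)` converges to
`Σ_r (F_r v) ∘ conj(F_r v)`. -/
theorem cesaro_average_of_unitary
    (N m : ℕ)
    (U : Matrix (Fin N) (Fin N) ℂ)
    (hU : U ∈ Matrix.unitaryGroup (Fin N) ℂ)
    (lam : Fin m → ℂ)
    (hlam_mod : ∀ r, ‖lam r‖ = 1)
    (hlam_inj : Function.Injective lam)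
    (F : Fin m → Matrix (Fin N) (Fin N) ℂ)
    (hdecomp : U = ∑ r, lam r • F r)
    (horth : ∀ r s, r ≠ s → F r * F s = 0)
    (hidem : ∀ r, F r * F r = F r)
    (hherm : ∀ r, (F r)ᴴ = F r)
    (hsum : ∑ r, F r = 1)
    (v : Fin N → ℂ)
    (hv : ‖v‖ = 1) :
    Tendsto
      (fun T : ℕ => fun i : Fin N =>
        (T : ℂ)⁻¹ * ∑ t ∈ Finset.range T,
          ((U ^ t).mulVec v i * star ((U ^ t).mulVec v i)))
      atTop
      (nhds (fun i : Fin N => ∑ r, ((F r).mulVec v i * star ((F r).mulVec v i)))) :=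
  cesaro_average_of_unitary_general N m U lam hlam_mod hlam_inj F hdecomp horth hsum v
end

section
/- Let D be a real symmetric n×n matrix with spectral decomposition D = Σ_{r=1}^m λ_r E_r. Then the time-averaged mixing matrix of the continuous quantum walk, M̂_C := lim_{T→∞} (1/T) ∫_0^T exp(itD) ∘ exp(−itD) dt, equals Σ_{r=1}^m E_r ∘ E_r (the sum of the entrywise squares of the spectral idempotents). -/
/-!
Because the `E r` are complete orthogonal idempotents, `exp(itD) = Σ_r e^{itλ_r} E_r`, so the
`(x, y)` entry of `exp(itD) ∘ exp(-itD)` is the trigonometric polynomial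
`Σ_{r,s} E_r(x,y) E_s(x,y) e^{it(λ_r - λ_s)}`. The time average of `e^{iωt}` tends to `1` if
`ω = 0` and to `0` otherwise (its integral stays bounded), and since the eigenvalues are distinct
only the diagonal terms `r = s` survive.
-/

open Matrix BigOperators Filter
open Complex Topology

namespace CompleteOrthogonalIdempotents

variable {ι R A : Type*} [Fintype ι] {e : ι → A}

theorem sum_smul_mul_sum_smul [CommSemiring R] [Semiring A] [Algebra R A]
    (he : CompleteOrthogonalIdempotents e) (a b : ι → R) :
    (∑ i, a i • e i) * (∑ i, b i • e i) = ∑ i, (a i * b i) • e i := by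
  classical
  simp only [Finset.sum_mul, Finset.mul_sum, smul_mul_smul_comm, he.mul_eq, smul_ite, smul_zero,
    Finset.sum_ite_eq', Finset.mem_univ, if_true]

theorem sum_smul_pow_s3 [CommSemiring R] [Semiring A] [Algebra R A]
    (he : CompleteOrthogonalIdempotents e) (a : ι → R) (k : ℕ) :
    (∑ i, a i • e i) ^ k = ∑ i, a i ^ k • e i := by
  induction k with
  | zero => simpa using he.complete.symm
  | succ k ih => simp only [pow_succ, ih, he.sum_smul_mul_sum_smul]

open NormedSpace in
theorem exp_sum_smul {𝕂 : Type*} [RCLike 𝕂] [Ring A] [Algebra 𝕂 A] [TopologicalSpace A]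
    [IsTopologicalRing A] [ContinuousSMul 𝕂 A] [T2Space A]
    (he : CompleteOrthogonalIdempotents e) (a : ι → 𝕂) :
    exp (∑ i, a i • e i) = ∑ i, exp (a i) • e i := by
  have hsummable (i : ι) := expSeries_summable' (𝕂 := 𝕂) (a i)
  simp only [exp_eq_tsum 𝕂, he.sum_smul_pow_s3, Finset.smul_sum, ← smul_assoc]
  rw [Summable.tsum_finsetSum fun i _ => (hsummable i).smul_const (e i)]
  exact Finset.sum_congr rfl fun i _ => (hsummable i).tsum_smul_const (e i)

end CompleteOrthogonalIdempotents

theorem tendsto_average_cexp_mul_I (ω : ℝ) :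
    Tendsto (fun T : ℝ => (1 / T : ℂ) * ∫ t in (0 : ℝ)..T, cexp (ω * I * t)) atTop
      (𝓝 (if ω = 0 then 1 else 0)) := by
  split_ifs with hω
  · refine tendsto_const_nhds.congr' ?_
    filter_upwards [eventually_ne_atTop 0] with T hT
    simp [hω, hT]
  · have hc : (ω * I : ℂ) ≠ 0 := mul_ne_zero (ofReal_ne_zero.mpr hω) I_ne_zero
    have hbound : ∀ᶠ T : ℝ in atTop,
        ‖(1 / T : ℂ) * ∫ t in (0 : ℝ)..T, cexp (ω * I * t)‖ ≤ 2 / ‖(ω * I : ℂ)‖ * T⁻¹ := by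
      filter_upwards [eventually_gt_atTop 0] with T hT
      have hunit : ‖cexp (ω * I * T)‖ = 1 := by
        rw [mul_right_comm, ← ofReal_mul, norm_exp_ofReal_mul_I]
      have hnum : ‖cexp (ω * I * T) - 1‖ ≤ 2 := by
        linarith [norm_sub_le (cexp (ω * I * T)) 1, norm_one (α := ℂ)]
      rw [integral_exp_mul_complex hc, norm_mul, norm_div, norm_div, norm_one, norm_real,
        Real.norm_of_nonneg hT.le, ofReal_zero, mul_zero, exp_zero, one_div, mul_comm]
      gcongr
    exact squeeze_zero_norm' hbound (by simpa using (tendsto_inv_atTop_zero (𝕜 := ℝ)).const_mul _)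

theorem tendsto_average_sum_mul_cexp {ι : Type*} (s : Finset ι) (c : ι → ℂ) (ω : ι → ℝ) :
    Tendsto (fun T : ℝ => (1 / T : ℂ) * ∫ t in (0 : ℝ)..T, ∑ k ∈ s, c k * cexp (ω k * I * t))
      atTop (𝓝 (∑ k ∈ s with ω k = 0, c k)) := by
  have hint (k : ι) (T : ℝ) : IntervalIntegrable (fun t : ℝ => c k * cexp (ω k * I * t))
      MeasureTheory.volume 0 T :=
    (by fun_prop : Continuous fun t : ℝ => c k * cexp (ω k * I * t)).intervalIntegrable _ _
  have hterm (k : ι) := (tendsto_average_cexp_mul_I (ω k)).const_mul (c k)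
  simp only [intervalIntegral.integral_finsetSum fun k _ => hint k _,
    intervalIntegral.integral_const_mul, Finset.mul_sum, mul_left_comm (1 / _ : ℂ)]
  simpa [Finset.sum_filter] using tendsto_finsetSum s fun k _ => hterm k

theorem Matrix.exp_smul_map_ofReal_sum_smul {n ι : Type*} [Fintype n] [DecidableEq n] [Fintype ι]
    {E : ι → Matrix n n ℝ} (hE : CompleteOrthogonalIdempotents E) (lam : ι → ℝ) (c : ℂ) :
    NormedSpace.exp (c • (∑ r, lam r • E r).map ofReal) =
      ∑ r, cexp (c * lam r) • (E r).map ofReal := by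
  have hlin : c • (∑ r, lam r • E r).map ofReal = ∑ r, (c * lam r) • (E r).map ofReal := by
    ext x y
    simp [Matrix.sum_apply, Finset.mul_sum, mul_assoc]
  have hE' : CompleteOrthogonalIdempotents fun r => (E r).map ofReal :=
    hE.map (RingHom.mapMatrix (m := n) ofRealHom)
  rw [hlin, hE'.exp_sum_smul, exp_eq_exp_ℂ]

theorem continuous_walk_average_mixing_general
    (n m : ℕ)
    (D : Matrix (Fin n) (Fin n) ℝ)
    (lam : Fin m → ℝ)
    (hlam_inj : Function.Injective lam)
    (E : Fin m → Matrix (Fin n) (Fin n) ℝ)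
    (hdecomp : D = ∑ r, lam r • E r)
    (horth : ∀ r s, r ≠ s → E r * E s = 0)
    (hidem : ∀ r, E r * E r = E r)
    (hsum : ∑ r, E r = 1) :
    ∀ x y : Fin n,
      Tendsto
        (fun T : ℝ => (1 / T) *
          ∫ t in (0:ℝ)..T,
            (NormedSpace.exp ((t * Complex.I) • D.map Complex.ofReal) x y) *
            (NormedSpace.exp ((-(t * Complex.I)) • D.map Complex.ofReal) x y))
        atTop
        (nhds ((((∑ r, (E r).hadamard (E r)) x y : ℝ) : ℂ))) := by
  intro x y
  have hE : CompleteOrthogonalIdempotents E := ⟨⟨hidem, horth⟩, hsum⟩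
  have hintegrand (t : ℝ) :
      NormedSpace.exp ((t * I) • D.map ofReal) x y *
        NormedSpace.exp ((-(t * I)) • D.map ofReal) x y =
      ∑ p : Fin m × Fin m, (E p.1 x y * E p.2 x y : ℂ) * cexp ((lam p.1 - lam p.2 : ℝ) * I * t) := by
    simp only [hdecomp, Matrix.exp_smul_map_ofReal_sum_smul hE, Matrix.sum_apply,
      Matrix.smul_apply, Matrix.map_apply, smul_eq_mul, Finset.sum_mul_sum, Fintype.sum_prod_type]
    refine Finset.sum_congr rfl fun r _ => Finset.sum_congr rfl fun s _ => ?_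
    rw [mul_mul_mul_comm, ← Complex.exp_add]
    push_cast
    ring_nf
  have hlimit : ∑ p : Fin m × Fin m with lam p.1 - lam p.2 = 0, (E p.1 x y * E p.2 x y : ℂ) =
      ((∑ r, E r ⊙ E r) x y : ℝ) := by
    have hdiag (p : Fin m × Fin m) : lam p.1 - lam p.2 = 0 ↔ p.1 = p.2 :=
      sub_eq_zero.trans hlam_inj.eq_iff
    simp [Finset.sum_filter, hdiag, Fintype.sum_prod_type, Matrix.sum_apply]
  simpa only [hintegrand, hlimit] using tendsto_average_sum_mul_cexp Finset.univ
    (fun p : Fin m × Fin m => (E p.1 x y * E p.2 x y : ℂ)) (fun p => lam p.1 - lam p.2)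

/-- For a real symmetric matrix `D` with spectral decomposition
`D = Σ_r λ_r E_r`, the average mixing matrix of the continuous quantum walk,
`lim_{T→∞} (1/T) ∫_0^T exp(itD) ∘ exp(−itD) dt`, equals `Σ_r E_r ∘ E_r`
(stated entrywise). -/
theorem continuous_walk_average_mixing
    (n m : ℕ)
    (D : Matrix (Fin n) (Fin n) ℝ)
    (hDsymm : D.IsSymm)
    (lam : Fin m → ℝ)
    (hlam_inj : Function.Injective lam)
    (E : Fin m → Matrix (Fin n) (Fin n) ℝ)
    (hdecomp : D = ∑ r, lam r • E r)
    (horth : ∀ r s, r ≠ s → E r * E s = 0)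
    (hidem : ∀ r, E r * E r = E r)
    (hsymm : ∀ r, (E r).IsSymm)
    (hsum : ∑ r, E r = 1) :
    ∀ x y : Fin n,
      Tendsto
        (fun T : ℝ => (1 / T) *
          ∫ t in (0:ℝ)..T,
            (NormedSpace.exp ((t * Complex.I) • D.map Complex.ofReal) x y) *
            (NormedSpace.exp ((-(t * Complex.I)) • D.map Complex.ofReal) x y))
        atTop
        (nhds ((((∑ r, (E r).hadamard (E r)) x y : ℝ) : ℂ))) :=
  continuous_walk_average_mixing_general n m D lam hlam_inj E hdecomp horth hidem hsum
end

section
/- Let D be a real symmetric n×n matrix. The matrix Σ_r E_r ∘ E_r (summed over the spectral idempotents of D) equals (1/n)J if and only if every eigenvalue of D is simple and every eigenvector of D is a scalar multiple of a vector all of whose entries are ±1. -/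
/-!
Each `E r` is a symmetric idempotent, so `E r j j = ∑ k, E r j k ^ 2`, and by Cauchy–Schwarz
`v i ^ 2 ≤ E r i i * ‖v‖²` for every `v` in the range of `E r`.

If `∑ r, E r ⊙ E r = J / n`, then `∑ r, E r i i = 1` and `∑ r, E r i i ^ 2 = 1 / n`, so
Cauchy–Schwarz forces `n ≤ m`. A nonzero projection has trace (= rank) at least `1` and the traces
add up to `n`, hence every trace is `1`, `m = n`, and equality in Cauchy–Schwarz gives
`E r i i = 1 / n`. An eigenvector `v` lies in the range of a single `E r`, so `v i ^ 2 ≤ ‖v‖² / n`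
for all `i`; both sides sum to `‖v‖²`, so equality holds and `v` is flat.

Conversely, the columns of `E r` are eigenvectors, hence flat, which gives
`n * E r i j ^ 2 = E r j j`, and summing over `r` yields `∑ r, E r i j ^ 2 = 1 / n`.
-/

open Matrix BigOperators Finset

variable {ι κ K : Type*}

theorem exists_eq_smul_pm_one_iff (v : ι → ℝ) :
    (∃ (c : ℝ) (s : ι → ℝ), (∀ i, s i = 1 ∨ s i = -1) ∧ v = c • s) ↔ ∃ a, ∀ i, v i ^ 2 = a := by
  constructor
  · rintro ⟨c, s, hs, rfl⟩
    refine ⟨c ^ 2, fun i => ?_⟩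
    rcases hs i with h | h <;> simp [h]
  · rintro ⟨a, ha⟩
    refine ⟨√a, fun i => if 0 ≤ v i then 1 else -1, fun i => by by_cases h : 0 ≤ v i <;> simp [h],
      ?_⟩
    ext i
    have hvi : √a = |v i| := by rw [← ha i, Real.sqrt_sq_eq_abs]
    by_cases h : 0 ≤ v i
    · simp [hvi, h, abs_of_nonneg h]
    · simp [hvi, h, abs_of_neg (not_le.1 h)]

theorem eq_inv_card_of_sum_eq_one_of_sum_sq_eq [Fintype κ] [Field K] [LinearOrder K]
    [IsStrictOrderedRing K] {x : κ → K} (h1 : ∑ r, x r = 1)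
    (h2 : ∑ r, x r ^ 2 = (Fintype.card κ : K)⁻¹) (r : κ) : x r = (Fintype.card κ : K)⁻¹ := by
  set c := (Fintype.card κ : K)⁻¹
  have hcard : (Fintype.card κ : K) ≠ 0 := by
    have : Nonempty κ := ⟨r⟩
    positivity
  -- the variance of `x` around its mean `c` vanishes
  have hvar : ∑ s, (x s - c) ^ 2 = 0 := by
    simp only [sub_sq, sum_add_distrib, sum_sub_distrib, ← sum_mul, ← mul_sum, h1, h2, sum_const,
      card_univ, nsmul_eq_mul, c]
    field_simp
    ring
  have := (sum_eq_zero_iff_of_nonneg fun s _ => sq_nonneg (x s - c)).1 hvar r (mem_univ r)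
  linarith [pow_eq_zero_iff two_ne_zero |>.1 this]

namespace Matrix

theorem sum_apply_self_eq_one [Fintype κ] [DecidableEq ι] [AddCommMonoidWithOne K]
    {E : κ → Matrix ι ι K} (hsum : ∑ r, E r = 1) (i : ι) : ∑ r, E r i i = 1 := by
  simpa [sum_apply] using congrFun (congrFun hsum i) i

theorem sum_hadamard_self_eq_smul_iff [Fintype κ] [Semiring K] {E : κ → Matrix ι ι K} (c : K) :
    (∑ r, E r ⊙ E r) = c • of (fun _ _ => 1) ↔ ∀ i j, ∑ r, E r i j ^ 2 = c := by
  simp [← Matrix.ext_iff, sum_apply, hadamard_apply, sq]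

variable [Fintype ι]

theorem one_le_trace_of_isIdempotentElem [DecidableEq ι] [Field K] [LinearOrder K]
    [IsStrictOrderedRing K] {A : Matrix ι ι K} (hA : IsIdempotentElem A) (hA0 : A ≠ 0) :
    1 ≤ A.trace := by
  have he : IsIdempotentElem (toLin' A) := hA.map toLinAlgEquiv'
  have hrank := (LinearMap.IsIdempotentElem.isProj_range _ he).trace
  have hne : LinearMap.trace K _ (toLin' A) ≠ 0 := by
    rw [Ne, LinearMap.IsIdempotentElem.trace_eq_zero_iff he]
    simpa using hA0
  rw [trace_toLin'_eq] at hrank hne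
  rw [hrank] at hne ⊢
  exact_mod_cast Nat.one_le_iff_ne_zero.2 (by exact_mod_cast hne)

section Symmetric

variable {A : Matrix ι ι K}

theorem IsSymm.apply_self_eq_sum_sq [CommSemiring K] (hs : A.IsSymm) (hi : IsIdempotentElem A)
    (i : ι) : A i i = ∑ k, A i k ^ 2 := by
  conv_lhs => rw [← hi.eq, mul_apply]
  simp_rw [sq, hs.apply i]

theorem IsSymm.card_mul_sq_eq_apply_self [CommSemiring K] (hs : A.IsSymm)
    (hi : IsIdempotentElem A) {j : ι} {a : K} (hcol : ∀ k, A k j ^ 2 = a) (i : ι) :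
    (Fintype.card ι : K) * A i j ^ 2 = A j j := by
  simp only [hs.apply_self_eq_sum_sq hi j, ← hs.apply j, hcol, sum_const, card_univ, nsmul_eq_mul]

variable [Field K] [LinearOrder K] [IsStrictOrderedRing K]

theorem IsSymm.sq_le_apply_self_mul_sum_sq (hs : A.IsSymm) (hi : IsIdempotentElem A)
    {v : ι → K} (hv : A *ᵥ v = v) (i : ι) : v i ^ 2 ≤ A i i * ∑ k, v k ^ 2 := by
  calc v i ^ 2 = (∑ k, A i k * v k) ^ 2 := by rw [← congrFun hv i]; rfl
    _ ≤ (∑ k, A i k ^ 2) * ∑ k, v k ^ 2 := sum_mul_sq_le_sq_mul_sq _ _ _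
    _ = A i i * ∑ k, v k ^ 2 := by rw [hs.apply_self_eq_sum_sq hi]

theorem IsSymm.sq_eq_of_mulVec_eq_self (hs : A.IsSymm) (hi : IsIdempotentElem A)
    (hd : ∀ i, A i i = (Fintype.card ι : K)⁻¹) {v : ι → K} (hv : A *ᵥ v = v) (i : ι) :
    v i ^ 2 = (Fintype.card ι : K)⁻¹ * ∑ k, v k ^ 2 := by
  have hle (k : ι) : v k ^ 2 ≤ (Fintype.card ι : K)⁻¹ * ∑ k, v k ^ 2 := by
    simpa only [hd] using hs.sq_le_apply_self_mul_sum_sq hi hv k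
  have hcard : (Fintype.card ι : K) ≠ 0 := by
    have : Nonempty ι := ⟨i⟩
    positivity
  refine (sum_eq_sum_iff_of_le fun k _ => hle k).1 ?_ i (mem_univ i)
  rw [sum_const, card_univ, nsmul_eq_mul, mul_inv_cancel_left₀ hcard]

end Symmetric

variable [Fintype κ] {E : κ → Matrix ι ι K}

section Spectral

variable [Field K] {lam : κ → K}

theorem sum_smul_mul_eq_smul (horth : ∀ r s, r ≠ s → E r * E s = 0)
    (hidem : ∀ r, IsIdempotentElem (E r)) (r : κ) : (∑ s, lam s • E s) * E r = lam r • E r := by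
  rw [sum_mul, sum_eq_single r (fun s _ hs => by rw [smul_mul, horth s r hs, smul_zero])
    (fun h => absurd (mem_univ r) h), smul_mul, (hidem r).eq]

theorem mul_sum_smul_eq_smul (horth : ∀ r s, r ≠ s → E r * E s = 0)
    (hidem : ∀ r, IsIdempotentElem (E r)) (r : κ) : E r * (∑ s, lam s • E s) = lam r • E r := by
  rw [mul_sum, sum_eq_single r
    (fun s _ hs => by rw [Matrix.mul_smul, horth r s hs.symm, smul_zero])
    (fun h => absurd (mem_univ r) h), Matrix.mul_smul, (hidem r).eq]

theorem exists_mulVec_eq_self_of_mulVec_eq_smul [DecidableEq ι] (hlam : Function.Injective lam)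
    (horth : ∀ r s, r ≠ s → E r * E s = 0) (hidem : ∀ r, IsIdempotentElem (E r))
    (hsum : ∑ r, E r = 1) {μ : K} {v : ι → K} (hv : v ≠ 0)
    (hDv : (∑ s, lam s • E s) *ᵥ v = μ • v) : ∃ r, E r *ᵥ v = v := by
  have hkill (s : κ) : (lam s - μ) • (E s *ᵥ v) = 0 := by
    have := congrArg (E s *ᵥ ·) hDv
    simp only [mulVec_mulVec, mul_sum_smul_eq_smul horth hidem, smul_mulVec, mulVec_smul] at this
    rw [sub_smul, this, sub_self]
  have hdecomp : ∑ s, E s *ᵥ v = v := by rw [← sum_mulVec, hsum, one_mulVec]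
  obtain ⟨r, hr⟩ : ∃ r, E r *ᵥ v ≠ 0 := by
    by_contra! h
    exact hv (by simpa [h] using hdecomp.symm)
  have hμ : lam r = μ := sub_eq_zero.1 ((smul_eq_zero.1 (hkill r)).resolve_right hr)
  have hother (s : κ) (hs : s ≠ r) : E s *ᵥ v = 0 :=
    (smul_eq_zero.1 (hkill s)).resolve_left (sub_ne_zero.2 (hμ ▸ hlam.ne hs))
  exact ⟨r, (sum_eq_single r (fun s _ hs => hother s hs) (by simp)).symm.trans hdecomp⟩

theorem sum_sq_apply_eq_inv_card_of_eigenvectors_flat [DecidableEq ι]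
    (horth : ∀ r s, r ≠ s → E r * E s = 0) (hidem : ∀ r, IsIdempotentElem (E r))
    (hsymm : ∀ r, (E r).IsSymm) (hsum : ∑ r, E r = 1)
    (hflat : ∀ (μ : K) (v : ι → K), v ≠ 0 → (∑ s, lam s • E s) *ᵥ v = μ • v →
      ∃ a, ∀ i, v i ^ 2 = a) (i j : ι) :
    ∑ r, E r i j ^ 2 = (Fintype.card ι : K)⁻¹ := by
  have hsq (r : κ) : (Fintype.card ι : K) * E r i j ^ 2 = E r j j := by
    -- the `j`-th column of `E r` is an eigenvector of `∑ s, lam s • E s`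
    obtain ⟨a, ha⟩ : ∃ a, ∀ k, E r k j ^ 2 = a := by
      by_cases h0 : E r *ᵥ Pi.single j 1 = 0
      · exact ⟨0, fun k => by simpa using congrFun h0 k⟩
      · simpa using hflat (lam r) _ h0 (by
          rw [mulVec_mulVec, sum_smul_mul_eq_smul horth hidem, smul_mulVec])
    exact (hsymm r).card_mul_sq_eq_apply_self (hidem r) ha i
  refine eq_inv_of_mul_eq_one_left ?_
  rw [mul_comm, mul_sum, sum_congr rfl fun r _ => hsq r]
  exact sum_apply_self_eq_one hsum j

end Spectral

section Mixing

variable [DecidableEq ι] [Field K] [LinearOrder K] [IsStrictOrderedRing K]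

theorem trace_eq_one_of_sum_sq_apply_self_eq (hidem : ∀ r, IsIdempotentElem (E r))
    (hne : ∀ r, E r ≠ 0) (hsum : ∑ r, E r = 1)
    (hmix : ∀ i, ∑ r, E r i i ^ 2 = (Fintype.card ι : K)⁻¹) (r : κ) : (E r).trace = 1 := by
  have hcard : Fintype.card ι ≤ Fintype.card κ := by
    cases isEmpty_or_nonempty ι
    · simp
    obtain ⟨i⟩ := ‹Nonempty ι›
    have hcs := sq_sum_le_card_mul_sum_sq (s := univ) (f := fun r => E r i i)
    rw [sum_apply_self_eq_one hsum, hmix i, one_pow, card_univ, ← div_eq_mul_inv,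
      one_le_div (by positivity)] at hcs
    exact_mod_cast hcs
  have hle : ∀ r ∈ univ, (1 : K) ≤ (E r).trace :=
    fun r _ => one_le_trace_of_isIdempotentElem (hidem r) (hne r)
  refine ((sum_eq_sum_iff_of_le hle).1 (le_antisymm (sum_le_sum hle) ?_) r (mem_univ r)).symm
  rw [← trace_sum, hsum, trace_one, sum_const, card_univ, nsmul_one]
  exact_mod_cast hcard

theorem apply_self_eq_inv_card_of_trace_eq_one (hsum : ∑ r, E r = 1)
    (hmix : ∀ i, ∑ r, E r i i ^ 2 = (Fintype.card ι : K)⁻¹) (htr : ∀ r, (E r).trace = 1)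
    (r : κ) (i : ι) : E r i i = (Fintype.card ι : K)⁻¹ := by
  have hcard : (Fintype.card κ : K) = Fintype.card ι := by
    simpa [trace_sum, htr] using congrArg trace hsum
  rw [← hcard] at hmix ⊢
  exact eq_inv_card_of_sum_eq_one_of_sum_sq_eq (sum_apply_self_eq_one hsum i) (hmix i) r

end Mixing

end Matrix

theorem continuous_avg_uniform_mixing_characterization_general
    (n m : ℕ)
    (D : Matrix (Fin n) (Fin n) ℝ)
    (lam : Fin m → ℝ)
    (hlam_inj : Function.Injective lam)
    (E : Fin m → Matrix (Fin n) (Fin n) ℝ)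
    (hdecomp : D = ∑ r, lam r • E r)
    (horth : ∀ r s, r ≠ s → E r * E s = 0)
    (hidem : ∀ r, E r * E r = E r)
    (hsymm : ∀ r, (E r).IsSymm)
    (hEne : ∀ r, E r ≠ 0)
    (hsum : ∑ r, E r = 1) :
    ((∑ r, (E r).hadamard (E r)) = (n : ℝ)⁻¹ • Matrix.of fun _ _ => (1 : ℝ)) ↔
      ((∀ r, Matrix.trace (E r) = 1) ∧
       (∀ (μ : ℝ) (v : Fin n → ℝ), v ≠ 0 → D.mulVec v = μ • v →
          ∃ (c : ℝ) (s : Fin n → ℝ), (∀ i, s i = 1 ∨ s i = -1) ∧ v = c • s)) := by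
  have hcard : (Fintype.card (Fin n) : ℝ)⁻¹ = (n : ℝ)⁻¹ := by simp
  rw [← hcard, sum_hadamard_self_eq_smul_iff]
  simp_rw [exists_eq_smul_pm_one_iff]
  subst hdecomp
  constructor
  · intro hmix
    have htr := trace_eq_one_of_sum_sq_apply_self_eq hidem hEne hsum fun i => hmix i i
    have hdiag := apply_self_eq_inv_card_of_trace_eq_one hsum (fun i => hmix i i) htr
    refine ⟨htr, fun μ v hv hDv => ?_⟩
    obtain ⟨r, hr⟩ := exists_mulVec_eq_self_of_mulVec_eq_smul hlam_inj horth hidem hsum hv hDv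
    exact ⟨_, (hsymm r).sq_eq_of_mulVec_eq_self (hidem r) (hdiag r) hr⟩
  · rintro ⟨-, hflat⟩
    exact sum_sq_apply_eq_inv_card_of_eigenvectors_flat horth hidem hsymm hsum hflat

/-- For a real symmetric `D` with spectral decomposition
`D = Σ_r λ_r E_r`, we have `Σ_r E_r ∘ E_r = (1/n)J` if and only if every eigenvalue
of `D` is simple (each eigenprojection has trace 1) and every eigenvector of `D`
is a scalar multiple of a `±1` vector. -/
theorem continuous_avg_uniform_mixing_characterization
    (n m : ℕ) (hn : 0 < n)
    (D : Matrix (Fin n) (Fin n) ℝ)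
    (hDsymm : D.IsSymm)
    (lam : Fin m → ℝ)
    (hlam_inj : Function.Injective lam)
    (E : Fin m → Matrix (Fin n) (Fin n) ℝ)
    (hdecomp : D = ∑ r, lam r • E r)
    (horth : ∀ r s, r ≠ s → E r * E s = 0)
    (hidem : ∀ r, E r * E r = E r)
    (hsymm : ∀ r, (E r).IsSymm)
    (hEne : ∀ r, E r ≠ 0)
    (hsum : ∑ r, E r = 1) :
    ((∑ r, (E r).hadamard (E r)) = (n : ℝ)⁻¹ • Matrix.of fun _ _ => (1 : ℝ)) ↔
      ((∀ r, Matrix.trace (E r) = 1) ∧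
       (∀ (μ : ℝ) (v : Fin n → ℝ), v ≠ 0 → D.mulVec v = μ • v →
          ∃ (c : ℝ) (s : Fin n → ℝ), (∀ i, s i = 1 ∨ s i = -1) ∧ v = c • s)) :=
  continuous_avg_uniform_mixing_characterization_general n m D lam hlam_inj E hdecomp horth hidem
    hsymm hEne hsum
end

section
/- If E is a real symmetric idempotent n×n matrix (an orthogonal projection) such that E ∘ E is a scalar multiple of the all-ones matrix J, then every entry of E has absolute value 1/n, E has trace 1, and hence E has rank one. -/
open Matrix BigOperators

lemma aux_rank_vecMulVec_le {n : ℕ} (w v : Fin n → ℝ) :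
    (Matrix.vecMulVec w v).rank ≤ 1 := by
  rw [Matrix.vecMulVec_eq (Fin 1)]
  exact le_trans (Matrix.rank_mul_le_right _ _)
    (by simpa using Matrix.rank_le_card_height (Matrix.replicateRow (Fin 1) v))

lemma aux_rank_pos_of_ne_zero {n : ℕ} (E : Matrix (Fin n) (Fin n) ℝ) (hE0 : E ≠ 0) :
    1 ≤ E.rank := by
  rcases Nat.eq_zero_or_pos E.rank with h | h
  · exfalso
    apply hE0
    have hb : LinearMap.range E.mulVecLin = ⊥ := by
      rw [Matrix.rank] at h
      exact Submodule.finrank_eq_zero.mp h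
    ext i j
    have hm := LinearMap.mem_range_self E.mulVecLin (Pi.single j 1)
    rw [hb, Submodule.mem_bot] at hm
    have := congrFun hm i
    simpa using this
  · exact h

/-- If `E` is a (nonzero) real symmetric idempotent `n×n` matrix such
that `E ∘ E` is a scalar multiple of the all-ones matrix `J`, then every entry of
`E` has absolute value `1/n`, `E` has trace `1`, and `E` has rank one. -/
theorem projection_flat_entries
    (n : ℕ) (hn : 0 < n)
    (E : Matrix (Fin n) (Fin n) ℝ)
    (hidem : E * E = E)
    (hsymm : Eᵀ = E)
    (hE0 : E ≠ 0)
    (hflat : ∃ c : ℝ, E.hadamard E = c • Matrix.of fun _ _ => (1 : ℝ)) :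
    (∀ x y, |E x y| = 1 / n) ∧ Matrix.trace E = 1 ∧ E.rank = 1 := by
  obtain ⟨c, hc⟩ := hflat
  have hnR : (0:ℝ) < n := by exact_mod_cast hn
  have hsq : ∀ i j, E i j * E i j = c := by
    intro i j
    have := congrFun (congrFun hc i) j
    simpa [Matrix.hadamard_apply] using this
  have hsymm' : ∀ i j, E j i = E i j := fun i j => by
    have := congrFun (congrFun hsymm i) j
    simpa [Matrix.transpose_apply] using this
  have hdiag : ∀ i, E i i = n * c := by
    intro i
    have h1 : (E * E) i i = E i i := by rw [hidem]
    rw [Matrix.mul_apply] at h1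
    have h2 : ∀ k ∈ Finset.univ, E i k * E k i = c := by
      intro k _; rw [hsymm' i k]; exact hsq i k
    rw [Finset.sum_congr rfl h2, Finset.sum_const] at h1
    simpa [mul_comm] using h1.symm
  have hcpos : 0 < c := by
    obtain ⟨i, j, hij⟩ : ∃ i j, E i j ≠ 0 := by
      by_contra h; push_neg at h; exact hE0 (by ext i j; simp [h])
    exact (hsq i j) ▸ mul_self_pos.mpr hij
  have hcval : c = 1 / (n^2 : ℝ) := by
    have i0 : Fin n := ⟨0, hn⟩
    have h1 := hsq i0 i0
    rw [hdiag i0] at h1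
    have hne : (n:ℝ) ≠ 0 := ne_of_gt hnR
    field_simp
    nlinarith [hcpos]
  have habs : ∀ x y, |E x y| = 1 / n := by
    intro x y
    have h2 : (E x y)^2 = (1/n)^2 := by
      rw [sq, hsq x y, hcval]; field_simp
    rw [← Real.sqrt_sq_eq_abs, h2, Real.sqrt_sq (by positivity)]
  have hdiag' : ∀ i, E i i = 1 / n := by
    intro i
    rw [hdiag i, hcval]; field_simp
  refine ⟨habs, ?_, ?_⟩
  · rw [Matrix.trace]
    simp only [Matrix.diag]
    rw [Finset.sum_congr rfl (fun i _ => hdiag' i), Finset.sum_const]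
    simp
    field_simp
  · set i0 : Fin n := ⟨0, hn⟩ with hi0
    have key : ∀ i k, E i k = n * (E i i0 * E k i0) := by
      intro i k
      have hsum : ∑ j, E i j * E j i0 = E i i0 := by
        have := congrFun (congrFun hidem i) i0
        rw [← this, Matrix.mul_apply]
      have habs1 : ∀ j, |(n:ℝ)^3 * E i i0 * (E i j * E j i0)| = 1 := by
        intro j
        rw [abs_mul, abs_mul, abs_mul, habs, habs, habs]
        rw [abs_of_nonneg (by positivity : (0:ℝ) ≤ (n:ℝ)^3)]
        field_simp
      have hsum2 : ∑ j, (n:ℝ)^3 * E i i0 * (E i j * E j i0) = ∑ _j : Fin n, (1:ℝ) := by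
        rw [← Finset.mul_sum, hsum, Finset.sum_const]
        have := hsq i i0
        simp only [Finset.card_univ, Fintype.card_fin, nsmul_eq_mul, mul_one]
        rw [mul_assoc, this, hcval]
        field_simp
      have hle : ∀ j ∈ Finset.univ, (n:ℝ)^3 * E i i0 * (E i j * E j i0) ≤ 1 := by
        intro j _
        calc (n:ℝ)^3 * E i i0 * (E i j * E j i0) ≤ |(n:ℝ)^3 * E i i0 * (E i j * E j i0)| :=
              le_abs_self _
          _ = 1 := habs1 j
      have heach := (Finset.sum_eq_sum_iff_of_le hle).mp hsum2 k (Finset.mem_univ k)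
      have hik := hsq i k
      have hii := hsq i i0
      have hkk := hsq k i0
      rw [hcval] at hik hii hkk
      have hne : (n:ℝ) ≠ 0 := ne_of_gt hnR
      have hik' : (n:ℝ)^2 * (E i k * E i k) = 1 := by rw [hik]; field_simp
      linear_combination (- E i k) * heach + (n:ℝ) * E i i0 * E k i0 * hik'
    have hE : E = Matrix.vecMulVec (fun i => (n:ℝ) * E i i0) (fun k => E k i0) := by
      ext i k
      rw [Matrix.vecMulVec_apply]
      rw [key i k]; ring
    refine le_antisymm ?_ (aux_rank_pos_of_ne_zero E hE0)
    rw [hE]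
    exact aux_rank_vecMulVec_le _ _
end

section
/- If the average mixing matrix of the continuous quantum walk on a reversible ergodic Markov chain equals (1/n)J (average uniform mixing), then the average mixing matrix of the Szegedy quantum walk also equals (1/n)J. -/
/-!
Each `E r ⊙ E r` is positive semidefinite (Schur product theorem), and their sum `J / n`
annihilates the zero-sum vectors, so each summand does too; being symmetric, each is then a
multiple `c r • J`. The Szegedy correction term is therefore a multiple of `(Pᵀ - 1) * J`,
which vanishes as soon as `P` is doubly stochastic. For that: `√π` is a `1`-eigenvector of `D`,
hence fixed by the spectral projection `E 0`. As `E 0 ⊙ E 0` is constant and `E 0` is a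
nonzero projection, every entry of `E 0` has absolute value `1 / n`, so `√π x` is at most the
mean of `√π` for every `x`; hence `π` is uniform and reversibility makes `P` symmetric.
-/

open Matrix BigOperators

namespace Matrix

theorem apply_eq_apply_of_mulVec_eq_zero {ι ι' R : Type*} [Fintype ι'] [Ring R]
    {A : Matrix ι ι' R} (hA : ∀ v : ι' → R, ∑ i, v i = 0 → A *ᵥ v = 0)
    (x : ι) (a b : ι') : A x a = A x b := by
  classical
  have hv : ∑ i, (Pi.single a 1 - Pi.single b 1 : ι' → R) i = 0 := by
    simp [Finset.sum_sub_distrib]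
  have h := congrFun (hA _ hv) x
  rw [mulVec_sub, mulVec_single_one, mulVec_single_one] at h
  exact sub_eq_zero.mp h

section PosSemidef

variable {ι 𝕜 : Type*} [Fintype ι] [RCLike 𝕜]

open scoped ComplexOrder

theorem IsHermitian.posSemidef_of_mul_self {E : Matrix ι ι 𝕜} (hE : E.IsHermitian)
    (hidem : E * E = E) : E.PosSemidef := by
  have : E = Eᴴ * E := by rw [hE.eq, hidem]
  exact this ▸ posSemidef_conjTranspose_mul_self E

theorem PosSemidef.mulVec_eq_zero_of_sum_mulVec_eq_zero {κ : Type*} {s : Finset κ}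
    {A : κ → Matrix ι ι 𝕜} (hA : ∀ r ∈ s, (A r).PosSemidef) {v : ι → 𝕜}
    (hv : (∑ r ∈ s, A r) *ᵥ v = 0) {r : κ} (hr : r ∈ s) : A r *ᵥ v = 0 := by
  have hsum : ∑ t ∈ s, star v ⬝ᵥ A t *ᵥ v = 0 := by
    rw [← dotProduct_sum, ← sum_mulVec, hv, dotProduct_zero]
  have hnonneg : ∀ t ∈ s, 0 ≤ star v ⬝ᵥ A t *ᵥ v := fun t ht =>
    (hA t ht).dotProduct_mulVec_nonneg v
  exact ((hA r hr).dotProduct_mulVec_zero_iff v).mp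
    ((Finset.sum_eq_zero_iff_of_nonneg hnonneg).mp hsum r hr)

theorem IsHermitian.exists_eq_smul_ones_of_mulVec_eq_zero {A : Matrix ι ι 𝕜}
    (hA : A.IsHermitian) (hker : ∀ v : ι → 𝕜, ∑ i, v i = 0 → A *ᵥ v = 0) :
    ∃ c : 𝕜, A = c • of fun _ _ => 1 := by
  rcases isEmpty_or_nonempty ι with _ | ⟨⟨x₀⟩⟩
  · exact ⟨0, Subsingleton.elim _ _⟩
  refine ⟨A x₀ x₀, Matrix.ext fun x y => ?_⟩
  have hrow := apply_eq_apply_of_mulVec_eq_zero hker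
  calc A x y = star (A y x) := (hA.apply x y).symm
    _ = star (A y x₀) := by rw [hrow y x x₀]
    _ = A x₀ y := hA.apply x₀ y
    _ = (A x₀ x₀ • of fun _ _ => (1 : 𝕜)) x y := by simp [hrow x₀ y x₀]

theorem PosSemidef.exists_eq_smul_ones_of_sum_eq_smul_ones {κ : Type*} {s : Finset κ}
    {A : κ → Matrix ι ι 𝕜} (hA : ∀ r ∈ s, (A r).PosSemidef) {c : 𝕜}
    (hsum : ∑ r ∈ s, A r = c • of fun _ _ => 1) {r : κ} (hr : r ∈ s) :
    ∃ d : 𝕜, A r = d • of fun _ _ => 1 :=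
  (hA r hr).isHermitian.exists_eq_smul_ones_of_mulVec_eq_zero fun v hv =>
    mulVec_eq_zero_of_sum_mulVec_eq_zero hA (by
      ext x
      simp [hsum, mulVec, dotProduct, ← Finset.mul_sum, hv]) hr

end PosSemidef

section Spectral

variable {ι κ K : Type*} [Fintype ι] [Fintype κ] [Field K]
  {D : Matrix ι ι K} {lam : κ → K} {E : κ → Matrix ι ι K}

theorem mul_eq_smul_of_eq_sum_smul (hD : D = ∑ r, lam r • E r)
    (horth : ∀ r s, r ≠ s → E r * E s = 0) (hidem : ∀ r, E r * E r = E r) (r : κ) :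
    E r * D = lam r • E r := by
  rw [hD, Finset.mul_sum, Finset.sum_eq_single r (fun s _ hs => by
    rw [Matrix.mul_smul, horth r s hs.symm, smul_zero]) (by simp), Matrix.mul_smul, hidem]

theorem mulVec_eq_self_of_mulVec_eq_smul [DecidableEq ι] (hlam : Function.Injective lam)
    (hD : D = ∑ r, lam r • E r) (horth : ∀ r s, r ≠ s → E r * E s = 0)
    (hidem : ∀ r, E r * E r = E r) (hsum : ∑ r, E r = 1) {s : κ} {v : ι → K}
    (hv : D *ᵥ v = lam s • v) : E s *ᵥ v = v := by
  have hother : ∀ r ≠ s, E r *ᵥ v = 0 := by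
    intro r hrs
    have h : lam s • (E r *ᵥ v) = lam r • (E r *ᵥ v) := by
      rw [← mulVec_smul, ← hv, mulVec_mulVec, mul_eq_smul_of_eq_sum_smul hD horth hidem,
        smul_mulVec]
    rw [← sub_eq_zero, ← sub_smul] at h
    exact (smul_eq_zero.mp h).resolve_left (sub_ne_zero.mpr (hlam.ne hrs.symm))
  calc E s *ᵥ v = ∑ r, E r *ᵥ v :=
        (Finset.sum_eq_single s (fun r _ => hother r) (by simp)).symm
    _ = v := by rw [← sum_mulVec, hsum, one_mulVec]

end Spectral

section Projection

variable {ι : Type*} [Fintype ι] {E : Matrix ι ι ℝ}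

theorem abs_apply_eq_inv_card_of_hadamard_self_eq_smul_ones (hs : E.IsSymm)
    (hidem : E * E = E) {c : ℝ} (hc : E ⊙ E = c • of fun _ _ => 1) (hE : E ≠ 0) (x y : ι) :
    |E x y| = (Fintype.card ι : ℝ)⁻¹ := by
  have hsq : ∀ x y, E x y ^ 2 = c := fun x y => by
    simpa [sq] using congrFun₂ hc x y
  have hdiag : ∀ x, E x x = Fintype.card ι * c := fun x => by
    rw [← congrFun₂ hidem x x, mul_apply]
    simp [← hs.apply x, ← sq, hsq]
  have hc0 : c ≠ 0 := by
    obtain ⟨x, y, hxy⟩ : ∃ x y, E x y ≠ 0 := by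
      by_contra! h
      exact hE (Matrix.ext h)
    exact hsq x y ▸ pow_ne_zero 2 hxy
  have hcard : (Fintype.card ι : ℝ) ^ 2 * c = 1 := by
    have h := hsq x x
    rw [hdiag] at h
    exact (mul_right_injective₀ hc0).eq_iff.mp (by linear_combination h)
  have hpos : (0 : ℝ) < Fintype.card ι := by exact_mod_cast Fintype.card_pos_iff.mpr ⟨x⟩
  rw [← abs_of_pos (inv_pos.mpr hpos), ← sq_eq_sq_iff_abs_eq_abs, hsq, inv_pow,
    eq_inv_of_mul_eq_one_right hcard]

theorem apply_eq_average_of_mulVec_eq_self (hE : ∀ x y, E x y ≤ (Fintype.card ι : ℝ)⁻¹)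
    {u : ι → ℝ} (hu : ∀ x, 0 ≤ u x) (hEu : E *ᵥ u = u) (x : ι) :
    u x = (Fintype.card ι : ℝ)⁻¹ * ∑ y, u y := by
  have hle : ∀ x, u x ≤ (Fintype.card ι : ℝ)⁻¹ * ∑ y, u y := fun x => by
    rw [← congrFun hEu x, mulVec, dotProduct, Finset.mul_sum]
    exact Finset.sum_le_sum fun y _ => mul_le_mul_of_nonneg_right (hE x y) (hu y)
  have hpos : (0 : ℝ) < Fintype.card ι := by exact_mod_cast Fintype.card_pos_iff.mpr ⟨x⟩
  have hsum : ∑ x, u x = ∑ _x : ι, (Fintype.card ι : ℝ)⁻¹ * ∑ y, u y := by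
    rw [Finset.sum_const, Finset.card_univ, nsmul_eq_mul, mul_inv_cancel_left₀ hpos.ne']
  exact (Finset.sum_eq_sum_iff_of_le fun x _ => hle x).mp hsum x (Finset.mem_univ x)

theorem apply_eq_apply_of_hadamard_self_eq_smul_ones (hs : E.IsSymm) (hidem : E * E = E)
    {c : ℝ} (hc : E ⊙ E = c • of fun _ _ => 1) {u : ι → ℝ} (hu : ∀ x, 0 < u x)
    (hEu : E *ᵥ u = u) (x y : ι) : u x = u y := by
  have hE : E ≠ 0 := fun h =>
    (hu x).ne' (by rw [← congrFun hEu x, h, zero_mulVec, Pi.zero_apply])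
  have havg := apply_eq_average_of_mulVec_eq_self (fun x y => (le_abs_self _).trans
    (abs_apply_eq_inv_card_of_hadamard_self_eq_smul_ones hs hidem hc hE x y).le)
    (fun x => (hu x).le) hEu
  rw [havg x, havg y]

end Projection

end Matrix

section Reversible

variable {ι : Type*} [Fintype ι] {P : Matrix ι ι ℝ} {π : ι → ℝ}

theorem mulVec_sqrt_eq_of_reversible {D : Matrix ι ι ℝ}
    (hP_nonneg : ∀ x y, 0 ≤ P x y) (hP_stoch : ∀ x, ∑ y, P x y = 1)
    (hπ : ∀ x, 0 ≤ π x) (hrev : ∀ x y, π x * P x y = π y * P y x)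
    (hD : ∀ x y, D x y = √(P x y * P y x)) :
    D *ᵥ (fun x => √(π x)) = fun x => √(π x) := by
  ext x
  have hterm : ∀ y, D x y * √(π y) = √(π x) * P x y := fun y => by
    rw [hD, ← Real.sqrt_mul (mul_nonneg (hP_nonneg x y) (hP_nonneg y x)),
      show P x y * P y x * π y = π x * (P x y * P x y) by linear_combination P x y * hrev y x,
      Real.sqrt_mul (hπ x), Real.sqrt_mul_self (hP_nonneg x y)]
  simp only [mulVec, dotProduct, hterm, ← Finset.mul_sum, hP_stoch, mul_one]

theorem transpose_mul_ones_of_reversible_of_const (hP_stoch : ∀ x, ∑ y, P x y = 1)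
    (hπ : ∀ x, π x ≠ 0) (hπ_const : ∀ x y, π x = π y)
    (hrev : ∀ x y, π x * P x y = π y * P y x) :
    Pᵀ * (of fun _ _ => (1 : ℝ)) = of fun _ _ => 1 := by
  ext x y
  simp only [mul_apply, transpose_apply, of_apply, mul_one]
  rw [← hP_stoch x]
  exact Finset.sum_congr rfl fun z _ => mul_left_cancel₀ (hπ z) (by rw [hrev, hπ_const x z])

end Reversible

theorem continuous_uniform_mixing_implies_szegedy_general
    (n m : ℕ)
    (P : Matrix (Fin n) (Fin n) ℝ)
    (hP_nonneg : ∀ x y, 0 ≤ P x y)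
    (hP_stoch : ∀ x, ∑ y, P x y = 1)
    (π : Fin n → ℝ)
    (hπ_pos : ∀ x, 0 < π x)
    (hrev : ∀ x y, π x * P x y = π y * P y x)
    (D : Matrix (Fin n) (Fin n) ℝ)
    (hD : ∀ x y, D x y = Real.sqrt (P x y * P y x))
    (lam : Fin (m + 1) → ℝ)
    (hlam_inj : Function.Injective lam)
    (hlam_one : lam 0 = 1)
    (E : Fin (m + 1) → Matrix (Fin n) (Fin n) ℝ)
    (hdecomp : D = ∑ r, lam r • E r)
    (horth : ∀ r s, r ≠ s → E r * E s = 0)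
    (hidem : ∀ r, E r * E r = E r)
    (hsymm : ∀ r, (E r).IsSymm)
    (hsum : ∑ r, E r = 1)
    (huniform : ∑ r, (E r).hadamard (E r) = (n : ℝ)⁻¹ • Matrix.of fun _ _ => (1 : ℝ)) :
    ∑ r, (E r).hadamard (E r)
      + (1 / 2 : ℝ) • ((Pᵀ - 1) *
          ∑ r ∈ Finset.univ.erase 0, (1 / (1 - lam r ^ 2)) • (E r).hadamard (E r))
      = (n : ℝ)⁻¹ • Matrix.of fun _ _ => (1 : ℝ) := by
  have hpsd r : ((E r).hadamard (E r)).PosSemidef :=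
    have hE := (isHermitian_iff_isSymm.mpr (hsymm r)).posSemidef_of_mul_self (hidem r)
    hE.hadamard hE
  choose c hc using fun r =>
    PosSemidef.exists_eq_smul_ones_of_sum_eq_smul_ones (fun r _ => hpsd r) huniform
      (Finset.mem_univ r)
  have hu : E 0 *ᵥ (fun x => √(π x)) = fun x => √(π x) :=
    mulVec_eq_self_of_mulVec_eq_smul hlam_inj hdecomp horth hidem hsum <| by
      rw [hlam_one, one_smul]
      exact mulVec_sqrt_eq_of_reversible hP_nonneg hP_stoch (fun x => (hπ_pos x).le) hrev hD
  have hπ_const (x y : Fin n) : π x = π y := by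
    rw [← Real.sqrt_inj (hπ_pos x).le (hπ_pos y).le]
    exact apply_eq_apply_of_hadamard_self_eq_smul_ones (hsymm 0) (hidem 0) (hc 0)
      (fun x => Real.sqrt_pos.mpr (hπ_pos x)) hu x y
  have hPJ := transpose_mul_ones_of_reversible_of_const hP_stoch (fun x => (hπ_pos x).ne')
    hπ_const hrev
  have hkill r : (Pᵀ - 1) * (E r).hadamard (E r) = 0 := by
    rw [hc r, Matrix.mul_smul, Matrix.sub_mul, hPJ, Matrix.one_mul, sub_self, smul_zero]
  rw [huniform, Finset.mul_sum, Finset.sum_eq_zero fun r _ => by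
    rw [Matrix.mul_smul, hkill, smul_zero], smul_zero, add_zero]

/-- If the continuous-walk average mixing matrix `Σ_r E_r∘E_r` of an
ergodic reversible Markov chain equals `(1/n)J`, then the Szegedy-walk average
mixing matrix `Σ_r E_r∘E_r + (1/2)(Pᵀ−I)Σ_{r≥2}(1/(1−λ_r²))E_r∘E_r` also equals
`(1/n)J`. -/
theorem continuous_uniform_mixing_implies_szegedy
    (n m : ℕ)
    (P : Matrix (Fin n) (Fin n) ℝ)
    (hP_nonneg : ∀ x y, 0 ≤ P x y)
    (hP_stoch : ∀ x, ∑ y, P x y = 1)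
    (π : Fin n → ℝ)
    (hπ_pos : ∀ x, 0 < π x)
    (hπ_sum : ∑ x, π x = 1)
    (hπ_stat : ∀ y, ∑ x, π x * P x y = π y)
    (hrev : ∀ x y, π x * P x y = π y * P y x)
    (D : Matrix (Fin n) (Fin n) ℝ)
    (hD : ∀ x y, D x y = Real.sqrt (P x y * P y x))
    (lam : Fin (m + 1) → ℝ)
    (hlam_inj : Function.Injective lam)
    (hlam_one : lam 0 = 1)
    (hlam_ne_negone : ∀ r, lam r ≠ -1)
    (E : Fin (m + 1) → Matrix (Fin n) (Fin n) ℝ)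
    (hdecomp : D = ∑ r, lam r • E r)
    (horth : ∀ r s, r ≠ s → E r * E s = 0)
    (hidem : ∀ r, E r * E r = E r)
    (hsymm : ∀ r, (E r).IsSymm)
    (hsum : ∑ r, E r = 1)
    (huniform : ∑ r, (E r).hadamard (E r) = (n : ℝ)⁻¹ • Matrix.of fun _ _ => (1 : ℝ)) :
    ∑ r, (E r).hadamard (E r)
      + (1 / 2 : ℝ) • ((Pᵀ - 1) *
          ∑ r ∈ Finset.univ.erase 0, (1 / (1 - lam r ^ 2)) • (E r).hadamard (E r))
      = (n : ℝ)⁻¹ • Matrix.of fun _ _ => (1 : ℝ) :=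
  continuous_uniform_mixing_implies_szegedy_general n m P hP_nonneg hP_stoch π hπ_pos hrev D hD lam
    hlam_inj hlam_one E hdecomp horth hidem hsymm hsum huniform
end

section
/- The Szegedy average mixing matrix M̂ = Σ_r E_r∘E_r + (1/2)(Pᵀ−I)Σ_{r≥2}(1/(1−λ_r²))E_r∘E_r of an ergodic reversible Markov chain is column-stochastic; in particular, the all-ones row vector is a left fixed vector: 𝟙 M̂ = 𝟙. -/
open Matrix BigOperators

/-- The Szegedy average mixing matrix
`M̂ = Σ_r E_r∘E_r + (1/2)(Pᵀ−I)Σ_{r≥2}(1/(1−λ_r²))E_r∘E_r` of an ergodic reversible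
Markov chain is column-stochastic; in particular every column sums to 1
(the all-ones row vector is a left fixed vector). -/
theorem szegedy_mixing_matrix_column_stochastic
    (n m : ℕ)
    (P : Matrix (Fin n) (Fin n) ℝ)
    (hP_nonneg : ∀ x y, 0 ≤ P x y)
    (hP_stoch : ∀ x, ∑ y, P x y = 1)
    (π : Fin n → ℝ)
    (hπ_pos : ∀ x, 0 < π x)
    (hπ_sum : ∑ x, π x = 1)
    (hπ_stat : ∀ y, ∑ x, π x * P x y = π y)
    (hrev : ∀ x y, π x * P x y = π y * P y x)
    (D : Matrix (Fin n) (Fin n) ℝ)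
    (hD : ∀ x y, D x y = Real.sqrt (P x y * P y x))
    (lam : Fin (m + 1) → ℝ)
    (hlam_inj : Function.Injective lam)
    (hlam_one : lam 0 = 1)
    (hlam_lt : ∀ r, r ≠ 0 → |lam r| < 1)
    (E : Fin (m + 1) → Matrix (Fin n) (Fin n) ℝ)
    (hdecomp : D = ∑ r, lam r • E r)
    (horth : ∀ r s, r ≠ s → E r * E s = 0)
    (hidem : ∀ r, E r * E r = E r)
    (hsymm : ∀ r, (E r).IsSymm)
    (hsum : ∑ r, E r = 1)
    (M : Matrix (Fin n) (Fin n) ℝ)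
    (hM : M = ∑ r, (E r).hadamard (E r)
      + (1 / 2 : ℝ) • ((Pᵀ - 1) *
          ∑ r ∈ Finset.univ.erase 0, (1 / (1 - lam r ^ 2)) • (E r).hadamard (E r))) :
    (∀ x y, 0 ≤ M x y) ∧ (∀ y, ∑ x, M x y = 1) := by
  classical
  -- eigen-equation: D * E r = lam r • E r
  have hDE : ∀ r, D * E r = lam r • E r := by
    intro r
    rw [hdecomp, Finset.sum_mul, Finset.sum_eq_single r]
    · rw [smul_mul_assoc, hidem]
    · intro s _ hs
      rw [smul_mul_assoc, horth s r hs, smul_zero]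
    · intro h; exact absurd (Finset.mem_univ r) h
  have hDExy : ∀ r x y, (∑ z, D x z * E r z y) = lam r * E r x y := by
    intro r x y
    have h := congrFun (congrFun (hDE r) x) y
    simpa [Matrix.mul_apply] using h
  -- entrywise formula for M
  have hMxy : ∀ x y, M x y = (∑ r, (E r x y)^2)
      + ∑ r ∈ Finset.univ.erase 0,
          (1/2) * (1/(1 - lam r ^ 2)) * ((∑ z, P z x * (E r z y)^2) - (E r x y)^2) := by
    intro x y
    have hB : ∀ z, (∑ r ∈ Finset.univ.erase 0,
        (1 / (1 - lam r ^ 2)) • (E r).hadamard (E r)) z y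
        = ∑ r ∈ Finset.univ.erase 0, (1/(1 - lam r ^ 2)) * (E r z y)^2 := by
      intro z
      rw [Matrix.sum_apply]
      refine Finset.sum_congr rfl fun r _ => ?_
      simp [Matrix.hadamard, sq]
    rw [hM]
    simp only [Matrix.add_apply, Matrix.smul_apply, Matrix.sum_apply, Matrix.mul_apply,
      Matrix.sub_apply, Matrix.transpose_apply, Matrix.one_apply, smul_eq_mul]
    congr 1
    · refine Finset.sum_congr rfl fun r _ => ?_
      simp [Matrix.hadamard, sq]
    · have hstep : ∀ z, (∑ r ∈ Finset.univ.erase 0,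
          (1/(1 - lam r ^ 2)) * ((E r).hadamard (E r)) z y)
          = ∑ r ∈ Finset.univ.erase 0, (1/(1 - lam r ^ 2)) * (E r z y)^2 := by
        intro z
        refine Finset.sum_congr rfl fun r _ => ?_
        simp [Matrix.hadamard, sq]
      have hstep2 : ∀ z, (P z x - if x = z then (1:ℝ) else 0) *
          (∑ r ∈ Finset.univ.erase 0, (1/(1 - lam r ^ 2)) * ((E r).hadamard (E r)) z y)
          = (∑ r ∈ Finset.univ.erase 0, P z x * ((1/(1 - lam r ^ 2)) * (E r z y)^2))
            - (if x = z then (1:ℝ) else 0) *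
              ∑ r ∈ Finset.univ.erase 0, (1/(1 - lam r ^ 2)) * (E r z y)^2 := by
        intro z
        rw [hstep z, sub_mul, Finset.mul_sum]
      rw [Finset.sum_congr rfl fun z _ => hstep2 z, Finset.sum_sub_distrib,
        Finset.sum_comm]
      have hdel : (∑ z, (if x = z then (1:ℝ) else 0) *
          ∑ r ∈ Finset.univ.erase 0, (1/(1 - lam r ^ 2)) * (E r z y)^2)
          = ∑ r ∈ Finset.univ.erase 0, (1/(1 - lam r ^ 2)) * (E r x y)^2 := by
        simp
      rw [hdel, ← Finset.sum_sub_distrib, Finset.mul_sum]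
      refine Finset.sum_congr rfl fun r _ => ?_
      have hz : ∑ z, P z x * ((1/(1 - lam r ^ 2)) * (E r z y)^2)
          = (1/(1 - lam r ^ 2)) * ∑ z, P z x * (E r z y)^2 := by
        rw [Finset.mul_sum]
        exact Finset.sum_congr rfl fun z _ => by ring
      rw [hz]
      ring
  -- per-term nonnegativity (sum-of-squares identity)
  have key : ∀ r, lam r ^ 2 < 1 → ∀ x y,
      0 ≤ (E r x y)^2 + (1/2) * (1/(1 - lam r ^ 2)) *
        ((∑ z, P z x * (E r z y)^2) - (E r x y)^2) := by
    intro r hl x y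
    have hpos : 0 < 1 - lam r ^ 2 := by linarith
    have expand : ∀ z,
        (Real.sqrt (P x z) * E r x y - lam r * Real.sqrt (P z x) * E r z y)^2
          + (1 - lam r ^ 2) * P z x * (E r z y)^2
        = P x z * (E r x y)^2 + P z x * (E r z y)^2
          - 2 * lam r * D x z * (E r x y) * (E r z y) := by
      intro z
      have h1 : Real.sqrt (P x z) ^ 2 = P x z := Real.sq_sqrt (hP_nonneg x z)
      have h2 : Real.sqrt (P z x) ^ 2 = P z x := Real.sq_sqrt (hP_nonneg z x)
      have h3 : Real.sqrt (P x z) * Real.sqrt (P z x) = D x z := by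
        rw [← Real.sqrt_mul (hP_nonneg x z), hD]
      linear_combination (E r x y)^2 * h1 + lam r ^ 2 * (E r z y)^2 * h2
        - 2 * lam r * (E r x y) * (E r z y) * h3
    have hS : ∑ z, (P x z * (E r x y)^2 + P z x * (E r z y)^2
          - 2 * lam r * D x z * (E r x y) * (E r z y))
        = (1 - 2 * lam r ^ 2) * (E r x y)^2 + ∑ z, P z x * (E r z y)^2 := by
      rw [Finset.sum_sub_distrib, Finset.sum_add_distrib]
      have h1 : ∑ z, P x z * (E r x y)^2 = (E r x y)^2 := by
        rw [← Finset.sum_mul, hP_stoch x, one_mul]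
      have h2 : ∑ z, 2 * lam r * D x z * (E r x y) * (E r z y)
          = 2 * lam r * (E r x y) * (lam r * E r x y) := by
        rw [← hDExy r x y, Finset.mul_sum]
        refine Finset.sum_congr rfl fun z _ => ?_
        ring
      rw [h1, h2]
      ring
    have keyeq : (E r x y)^2 + (1/2) * (1/(1 - lam r ^ 2)) *
          ((∑ z, P z x * (E r z y)^2) - (E r x y)^2)
        = (1/2) * (1/(1 - lam r ^ 2)) *
          ∑ z, ((Real.sqrt (P x z) * E r x y - lam r * Real.sqrt (P z x) * E r z y)^2
            + (1 - lam r ^ 2) * P z x * (E r z y)^2) := by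
      rw [Finset.sum_congr rfl fun z _ => expand z, hS]
      field_simp
      ring
    rw [keyeq]
    refine mul_nonneg (by positivity) (Finset.sum_nonneg fun z _ => ?_)
    refine add_nonneg (sq_nonneg _) ?_
    exact mul_nonneg (mul_nonneg hpos.le (hP_nonneg z x)) (sq_nonneg _)
  have hsq : ∀ r, r ≠ 0 → lam r ^ 2 < 1 := by
    intro r hr
    have h := abs_lt.mp (hlam_lt r hr)
    nlinarith [h.1, h.2]
  constructor
  · intro x y
    rw [hMxy x y, ← Finset.add_sum_erase Finset.univ (fun r => (E r x y)^2)
      (Finset.mem_univ 0), add_assoc, ← Finset.sum_add_distrib]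
    refine add_nonneg (sq_nonneg _) (Finset.sum_nonneg fun r hr => ?_)
    exact key r (hsq r (Finset.ne_of_mem_erase hr)) x y
  · intro y
    have hcol : ∀ x, M x y = (∑ r, (E r x y)^2)
        + ∑ r ∈ Finset.univ.erase 0,
            (1/2) * (1/(1 - lam r ^ 2)) * ((∑ z, P z x * (E r z y)^2) - (E r x y)^2) :=
      fun x => hMxy x y
    rw [Finset.sum_congr rfl fun x _ => hcol x, Finset.sum_add_distrib]
    have h1 : ∑ x, ∑ r, (E r x y)^2 = 1 := by
      rw [Finset.sum_comm]
      have hr : ∀ r, ∑ x, (E r x y)^2 = E r y y := by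
        intro r
        have : ∀ x, (E r x y)^2 = E r y x * E r x y := by
          intro x
          rw [sq, (hsymm r).apply x y]
        rw [Finset.sum_congr rfl fun x _ => this x, ← Matrix.mul_apply, hidem]
      rw [Finset.sum_congr rfl fun r _ => hr r]
      have := congrFun (congrFun hsum y) y
      rw [Matrix.sum_apply] at this
      rw [this, Matrix.one_apply_eq]
    have h2 : ∑ x, ∑ r ∈ Finset.univ.erase 0,
        (1/2) * (1/(1 - lam r ^ 2)) * ((∑ z, P z x * (E r z y)^2) - (E r x y)^2) = 0 := by
      rw [Finset.sum_comm]
      refine Finset.sum_eq_zero fun r _ => ?_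
      have hz : ∑ x, ((∑ z, P z x * (E r z y)^2) - (E r x y)^2) = 0 := by
        rw [Finset.sum_sub_distrib, Finset.sum_comm]
        have : ∀ z, ∑ x, P z x * (E r z y)^2 = (E r z y)^2 := by
          intro z
          rw [← Finset.sum_mul, hP_stoch z, one_mul]
        rw [Finset.sum_congr rfl fun z _ => this z, sub_self]
      rw [← Finset.mul_sum, hz, mul_zero]
    rw [h1, h2, add_zero]
end

section
/- Let P₁,...,P_k be symmetric Markov chains, each with simple eigenvalues and all eigenvectors being multiples of ±1 vectors (i.e., each is average uniform mixing for the continuous walk). If for each choice of eigenvalues λ(j) ∈ Spec(P_j) the products Π_j λ(j) are pairwise distinct, then the tensor product P₁ ⊗ ... ⊗ P_k also has simple eigenvalues with all eigenvectors multiples of ±1 vectors, and hence its continuous quantum walk is average uniform mixing. -/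
/-! Each factor `Pᵢ` is symmetric, so it has an eigenbasis, and simplicity of its spectrum makes
the eigenvalues of that basis pairwise distinct. The Kronecker products of basis vectors, one
from each factor, are eigenvectors of `P₁ ⊗ ⋯ ⊗ Pₖ` whose eigenvalues are the products of the
factor eigenvalues; by hypothesis these products are pairwise distinct, so the product vectors
form an eigenbasis with simple spectrum and every eigenvector is a multiple of one of them.
A Kronecker product of `±1` vectors is again a `±1` vector. -/
open Matrix BigOperators

/-- A symmetric matrix has "simple eigenvalues with all eigenvectors multiples of
`±1` vectors": every eigenspace is one-dimensional and every eigenvector is a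
scalar multiple of a vector with all entries `+1` or `−1`.  By the characterization
of average uniform mixing, this is equivalent to the continuous quantum walk on the
matrix being average uniform mixing. -/
def SimpleFlatSpectrum {ι : Type*} [Fintype ι] [DecidableEq ι]
    (A : Matrix ι ι ℝ) : Prop :=
  (∀ (μ : ℝ) (v w : ι → ℝ), v ≠ 0 → A.mulVec v = μ • v → A.mulVec w = μ • w →
      ∃ c : ℝ, w = c • v) ∧
  (∀ (μ : ℝ) (v : ι → ℝ), v ≠ 0 → A.mulVec v = μ • v →
      ∃ (c : ℝ) (s : ι → ℝ), (∀ i, s i = 1 ∨ s i = -1) ∧ v = c • s)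

open Module

namespace Module.Basis

variable {K V ι : Type*} [Field K] [AddCommGroup V] [Module K V]
  {T : End K V} {b : Basis ι K V} {lam : ι → K}

theorem repr_apply_eq_mul_of_eigen (hb : ∀ j, T (b j) = lam j • b j) (v : V) (j : ι) :
    b.repr (T v) j = lam j * b.repr v j := by
  suffices Finsupp.lapply j ∘ₗ b.repr.toLinearMap ∘ₗ T =
      lam j • (Finsupp.lapply j ∘ₗ b.repr.toLinearMap) from LinearMap.congr_fun this v
  refine b.ext fun i => ?_
  rcases eq_or_ne i j with rfl | hij
  · simp [hb]
  · simp [hb, hij]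

theorem exists_eq_smul_of_eigen [Fintype ι] (hb : ∀ j, T (b j) = lam j • b j)
    (hlam : Function.Injective lam) {μ : K} {v : V} (hv0 : v ≠ 0) (hv : T v = μ • v) :
    ∃ j, ∃ c : K, lam j = μ ∧ v = c • b j := by
  have hsupp : ∀ j, b.repr v j ≠ 0 → lam j = μ := fun j hj => by
    have := b.repr_apply_eq_mul_of_eigen hb v j
    rw [hv, map_smul, Finsupp.smul_apply, smul_eq_mul] at this
    exact (mul_right_cancel₀ hj this).symm
  obtain ⟨j, hj⟩ : ∃ j, b.repr v j ≠ 0 := by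
    by_contra! h
    exact hv0 (b.repr.map_eq_zero_iff.1 (Finsupp.ext h))
  refine ⟨j, b.repr v j, hsupp j hj, ?_⟩
  conv_lhs => rw [← b.sum_repr v]
  refine Finset.sum_eq_single j (fun i _ hij => ?_) (by simp)
  have : b.repr v i = 0 := by
    by_contra hi
    exact hij (hlam ((hsupp i hi).trans (hsupp j hj).symm))
  rw [this, zero_smul]

theorem injective_of_eigen (hb : ∀ j, T (b j) = lam j • b j)
    (hsimple : ∀ (μ : K) (v w : V), v ≠ 0 → T v = μ • v → T w = μ • w → ∃ c : K, w = c • v) :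
    Function.Injective lam := by
  intro j j' h
  by_contra hne
  obtain ⟨c, hc⟩ := hsimple (lam j) (b j) (b j') (b.ne_zero j) (hb j) (h ▸ hb j')
  refine one_ne_zero (b.linearIndependent.eq_zero_of_smul_mem_span j' (1 : K) ?_)
  rw [one_smul, hc]
  exact Submodule.smul_mem _ c (Submodule.subset_span ⟨j, by simpa using hne, rfl⟩)

end Module.Basis

theorem Matrix.IsSymm.exists_basis_mulVec_eq_smul {m : Type*} [Fintype m] [DecidableEq m]
    {A : Matrix m m ℝ} (hA : A.IsSymm) :
    ∃ (b : Basis m ℝ (m → ℝ)) (lam : m → ℝ), ∀ j, A *ᵥ b j = lam j • b j := by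
  have hA' : A.IsHermitian := by
    rw [IsHermitian, conjTranspose_eq_transpose_of_trivial]; exact hA
  refine ⟨hA'.eigenvectorBasis.toBasis.map (WithLp.linearEquiv 2 ℝ (m → ℝ)), hA'.eigenvalues,
    fun j => ?_⟩
  simpa using hA'.mulVec_eigenvectorBasis j

def IsFlat {m R : Type*} [Ring R] (v : m → R) : Prop :=
  ∃ (c : R) (s : m → R), (∀ i, s i = 1 ∨ s i = -1) ∧ v = c • s

theorem IsFlat.smul {m R : Type*} [Ring R] {v : m → R} (hv : IsFlat v) (a : R) :
    IsFlat (a • v) := by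
  obtain ⟨c, s, hs, rfl⟩ := hv
  exact ⟨a * c, s, hs, smul_smul a c s⟩

theorem simpleFlatSpectrum_of_eigenvectors {m : Type*} [Fintype m] [DecidableEq m]
    {A : Matrix m m ℝ} {U : m → m → ℝ} {lam : m → ℝ} (hU : ∀ j, A *ᵥ U j = lam j • U j)
    (hU0 : ∀ j, U j ≠ 0) (hlam : Function.Injective lam) (hflat : ∀ j, IsFlat (U j)) :
    SimpleFlatSpectrum A := by
  have hli : LinearIndependent ℝ U := Module.End.eigenvectors_linearIndependent' A.mulVecLin
    lam hlam U fun j => ⟨Module.End.mem_eigenspace_iff.2 (hU j), hU0 j⟩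
  set b := basisOfLinearIndependentOfCardEqFinrank' U hli (finrank_fintype_fun_eq_card ℝ).symm
  have hbU : ⇑b = U := coe_basisOfLinearIndependentOfCardEqFinrank' ..
  have hb : ∀ j, A.mulVecLin (b j) = lam j • b j := hbU ▸ hU
  constructor
  · intro μ v w hv hAv hAw
    by_cases hw : w = 0
    · exact ⟨0, by rw [hw, zero_smul]⟩
    obtain ⟨j, c, hj, rfl⟩ := b.exists_eq_smul_of_eigen hb hlam hv hAv
    obtain ⟨j', d, hj', rfl⟩ := b.exists_eq_smul_of_eigen hb hlam hw hAw
    obtain rfl : j = j' := hlam (hj.trans hj'.symm)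
    have hc : c ≠ 0 := left_ne_zero_of_smul hv
    exact ⟨d / c, by rw [smul_smul, div_mul_cancel₀ d hc]⟩
  · intro μ v hv hAv
    obtain ⟨j, c, -, rfl⟩ := b.exists_eq_smul_of_eigen hb hlam hv hAv
    rw [hbU]
    exact (hflat j).smul c

section PiKronecker

variable {ι : Type*} [Fintype ι] {n : ι → Type*} {R : Type*}

def Matrix.piKronecker [∀ i, Fintype (n i)] [CommSemiring R] (P : ∀ i, Matrix (n i) (n i) R) :
    Matrix (∀ i, n i) (∀ i, n i) R :=
  of fun x y => ∏ i, P i (x i) (y i)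

def piTprod [CommSemiring R] (v : ∀ i, n i → R) : (∀ i, n i) → R :=
  fun x => ∏ i, v i (x i)

theorem Matrix.piKronecker_mulVec_piTprod [∀ i, Fintype (n i)] [DecidableEq ι] [CommSemiring R]
    (P : ∀ i, Matrix (n i) (n i) R) (v : ∀ i, n i → R) :
    piKronecker P *ᵥ piTprod v = piTprod fun i => P i *ᵥ v i := by
  ext x
  simp only [piKronecker, piTprod, mulVec, dotProduct, of_apply, ← Finset.prod_mul_distrib]
  exact (Fintype.prod_sum fun i j => P i (x i) j * v i j).symm

theorem piTprod_smul [CommSemiring R] (c : ι → R) (v : ∀ i, n i → R) :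
    piTprod (fun i => c i • v i) = (∏ i, c i) • piTprod v := by
  ext x
  simp [piTprod, Finset.prod_mul_distrib]

theorem piTprod_ne_zero [CommSemiring R] [NoZeroDivisors R] [Nontrivial R] {v : ∀ i, n i → R}
    (hv : ∀ i, v i ≠ 0) : piTprod v ≠ 0 := by
  choose x hx using fun i => Function.ne_iff.1 (hv i)
  exact Function.ne_iff.2 ⟨x, Finset.prod_ne_zero_iff.2 fun i _ => hx i⟩

theorem IsFlat.piTprod [CommRing R] {v : ∀ i, n i → R} (hv : ∀ i, IsFlat (v i)) :
    IsFlat (piTprod v) := by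
  choose c s hs hcs using hv
  obtain rfl : v = fun i => c i • s i := funext hcs
  refine ⟨∏ i, c i, _root_.piTprod s, fun x => ?_, piTprod_smul c s⟩
  exact Finset.prod_induction (fun i => s i (x i)) (fun a : R => a = 1 ∨ a = -1)
    (by rintro a b (rfl | rfl) (rfl | rfl) <;> norm_num) (Or.inl rfl) fun i _ => hs i (x i)

end PiKronecker

theorem tensor_product_average_uniform_mixing_general
    (k : ℕ) (nsz : Fin k → ℕ)
    (P : ∀ i, Matrix (Fin (nsz i)) (Fin (nsz i)) ℝ)
    (hsymm : ∀ i, (P i)ᵀ = P i)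
    (hmix : ∀ i, SimpleFlatSpectrum (P i))
    (hdistinct : ∀ μ ν : (i : Fin k) → ℝ,
      (∀ i, ∃ v : Fin (nsz i) → ℝ, v ≠ 0 ∧ (P i).mulVec v = μ i • v) →
      (∀ i, ∃ v : Fin (nsz i) → ℝ, v ≠ 0 ∧ (P i).mulVec v = ν i • v) →
      ∏ i, μ i = ∏ i, ν i → μ = ν) :
    SimpleFlatSpectrum
      (Matrix.of fun x y : (i : Fin k) → Fin (nsz i) => ∏ i, P i (x i) (y i)) := by
  choose b lam hb using fun i => Matrix.IsSymm.exists_basis_mulVec_eq_smul (hsymm i)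
  have hlam i : Function.Injective (lam i) :=
    (b i).injective_of_eigen (T := (P i).mulVecLin) (hb i) (hmix i).1
  have heigen i (j : Fin (nsz i)) : ∃ v, v ≠ 0 ∧ P i *ᵥ v = lam i j • v :=
    ⟨b i j, (b i).ne_zero j, hb i j⟩
  have hprod_inj : Function.Injective fun f : ∀ i, Fin (nsz i) => ∏ i, lam i (f i) :=
    fun f g hfg => funext fun i => hlam i <| congrFun
      (hdistinct _ _ (fun i => heigen i (f i)) (fun i => heigen i (g i)) hfg) i
  refine simpleFlatSpectrum_of_eigenvectors (U := fun f => piTprod fun i => b i (f i))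
    (A := piKronecker P) (fun f => ?_) (fun f => piTprod_ne_zero fun i => (b i).ne_zero _)
    hprod_inj fun f => IsFlat.piTprod fun i => (hmix i).2 _ _ ((b i).ne_zero _) (hb i (f i))
  rw [piKronecker_mulVec_piTprod, ← piTprod_smul]
  simp only [hb]

/-- If each symmetric Markov chain `P_1,...,P_k` has simple eigenvalues
with all eigenvectors multiples of `±1` vectors (i.e. each is average uniform mixing
for the continuous walk), and all products of choices of eigenvalues, one from each
`P_j`, are pairwise distinct, then the tensor product `P_1 ⊗ ... ⊗ P_k` also has
simple eigenvalues with all eigenvectors multiples of `±1` vectors (hence its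
continuous quantum walk is average uniform mixing). -/
theorem tensor_product_average_uniform_mixing
    (k : ℕ) (nsz : Fin k → ℕ)
    (P : ∀ i, Matrix (Fin (nsz i)) (Fin (nsz i)) ℝ)
    (hsymm : ∀ i, (P i)ᵀ = P i)
    (hnonneg : ∀ i x y, 0 ≤ P i x y)
    (hstoch : ∀ i x, ∑ y, P i x y = 1)
    (hmix : ∀ i, SimpleFlatSpectrum (P i))
    (hdistinct : ∀ μ ν : (i : Fin k) → ℝ,
      (∀ i, ∃ v : Fin (nsz i) → ℝ, v ≠ 0 ∧ (P i).mulVec v = μ i • v) →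
      (∀ i, ∃ v : Fin (nsz i) → ℝ, v ≠ 0 ∧ (P i).mulVec v = ν i • v) →
      ∏ i, μ i = ∏ i, ν i → μ = ν) :
    SimpleFlatSpectrum
      (Matrix.of fun x y : (i : Fin k) → Fin (nsz i) => ∏ i, P i (x i) (y i)) :=
  tensor_product_average_uniform_mixing_general k nsz P hsymm hmix hdistinct
end

section
/- Let P be a symmetric Markov chain whose entries lie in a subfield F of ℝ containing ℚ, with spectral decomposition P = Σ_r λ_r E_r over a splitting field K of the characteristic polynomial of P. Then every element of Gal(K/F) permutes the set of spectral idempotents {E_r}, and consequently the matrix Σ_r E_r∘E_r has all its entries in F. -/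
open Matrix BigOperators Polynomial

/-- Let `P` be a symmetric Markov chain with entries in a subfield
`F` of `ℝ` (so `ℚ ⊆ F ⊆ ℝ`), and let `K` be a splitting field of the
characteristic polynomial of `P` over `F` (a Galois extension), over which `P`
has spectral decomposition `P = Σ_r λ_r E_r`.  Then every `τ ∈ Gal(K/F)` permutes
the set of spectral idempotents `{E_r}`, and consequently every entry of
`Σ_r E_r∘E_r` lies in `F` (i.e. in the image of `F` in `K`). -/
theorem galois_fixes_sum_hadamard_squares
    (n m : ℕ)
    (F : Subfield ℝ)
    (P₀ : Matrix (Fin n) (Fin n) F)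
    (hPsymm : P₀ᵀ = P₀)
    (hP_nonneg : ∀ x y, (0 : ℝ) ≤ (P₀ x y : ℝ))
    (hP_stoch : ∀ x, ∑ y, (P₀ x y : ℝ) = 1)
    (K : Type) [Field K] [Algebra F K]
    [Polynomial.IsSplittingField F K P₀.charpoly]
    [IsGalois F K]
    (lam : Fin m → K)
    (hlam_inj : Function.Injective lam)
    (E : Fin m → Matrix (Fin n) (Fin n) K)
    (hdecomp : P₀.map (algebraMap F K) = ∑ r, lam r • E r)
    (horth : ∀ r s, r ≠ s → E r * E s = 0)
    (hidem : ∀ r, E r * E r = E r)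
    (hsum : ∑ r, E r = 1) :
    (∀ τ : K ≃ₐ[F] K, ∀ r, ∃ r', (E r).map τ = E r') ∧
    (∀ x y, (∑ r, (E r).hadamard (E r)) x y ∈ (algebraMap F K).range) := by
  classical
  set Pk : Matrix (Fin n) (Fin n) K := P₀.map (algebraMap F K) with hPkdef
  -- basic facts about entrywise application of τ
  have map_mul' : ∀ (τ : K ≃ₐ[F] K) (A B : Matrix (Fin n) (Fin n) K),
      (A * B).map τ = A.map τ * B.map τ := fun τ A B =>
    Matrix.map_mul (f := (τ : K →+* K))
  have map_smul' : ∀ (τ : K ≃ₐ[F] K) (c : K) (A : Matrix (Fin n) (Fin n) K),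
      ((c • A).map τ) = τ c • A.map τ := by
    intro τ c A; ext x y; simp [Matrix.map_apply]
  have map_sum' : ∀ (τ : K ≃ₐ[F] K) (f : Fin m → Matrix (Fin n) (Fin n) K),
      ((∑ r, f r).map τ) = ∑ r, (f r).map τ := by
    intro τ f; ext x y; simp [Matrix.map_apply, Matrix.sum_apply]
  have map_one' : ∀ (τ : K ≃ₐ[F] K),
      ((1 : Matrix (Fin n) (Fin n) K).map τ) = 1 := fun τ =>
    Matrix.map_one τ (map_zero τ) (map_one τ)
  have map_eq_zero : ∀ (τ : K ≃ₐ[F] K) (A : Matrix (Fin n) (Fin n) K),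
      A.map τ = 0 → A = 0 := by
    intro τ A h; ext x y
    have := congrFun (congrFun h x) y
    simp only [Matrix.map_apply, Matrix.zero_apply] at this ⊢
    exact (map_eq_zero_iff τ τ.injective).mp this
  have hPfix : ∀ τ : K ≃ₐ[F] K, Pk.map τ = Pk := by
    intro τ; ext x y; simp [hPkdef, Matrix.map_apply]
  -- left/right eigen-equations for arbitrary spectral decompositions
  have left_eig : ∀ (lam' : Fin m → K) (E' : Fin m → Matrix (Fin n) (Fin n) K),
      (∀ r s, r ≠ s → E' r * E' s = 0) → (∀ r, E' r * E' r = E' r) →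
      ∀ t, (∑ r, lam' r • E' r) * E' t = lam' t • E' t := by
    intro lam' E' horth' hidem' t
    rw [Finset.sum_mul]
    rw [Finset.sum_eq_single t]
    · rw [smul_mul_assoc, hidem' t]
    · intro b _ hb; rw [smul_mul_assoc, horth' b t hb, smul_zero]
    · intro h; exact absurd (Finset.mem_univ t) h
  have right_eig : ∀ (lam' : Fin m → K) (E' : Fin m → Matrix (Fin n) (Fin n) K),
      (∀ r s, r ≠ s → E' r * E' s = 0) → (∀ r, E' r * E' r = E' r) →
      ∀ t, E' t * (∑ r, lam' r • E' r) = lam' t • E' t := by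
    intro lam' E' horth' hidem' t
    rw [Finset.mul_sum]
    rw [Finset.sum_eq_single t]
    · rw [mul_smul_comm, hidem' t]
    · intro b _ hb; rw [mul_smul_comm, horth' t b (Ne.symm hb), smul_zero]
    · intro h; exact absurd (Finset.mem_univ t) h
  -- facts about the τ-images of the idempotents
  have horthτ : ∀ (τ : K ≃ₐ[F] K) r s, r ≠ s → (E r).map τ * (E s).map τ = 0 := by
    intro τ r s hrs
    rw [← map_mul' τ, horth r s hrs]
    ext x y; simp [Matrix.map_apply]
  have hidemτ : ∀ (τ : K ≃ₐ[F] K) r, (E r).map τ * (E r).map τ = (E r).map τ := by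
    intro τ r; rw [← map_mul' τ, hidem r]
  have hsumτ : ∀ (τ : K ≃ₐ[F] K), ∑ r, (E r).map τ = 1 := by
    intro τ; rw [← map_sum' τ, hsum, map_one' τ]
  have hdecompτ : ∀ (τ : K ≃ₐ[F] K), Pk = ∑ r, τ (lam r) • (E r).map τ := by
    intro τ
    conv_lhs => rw [← hPfix τ, hdecomp, map_sum' τ]
    refine Finset.sum_congr rfl fun r _ => ?_
    exact map_smul' τ (lam r) (E r)
  -- cross orthogonality: E s * (E r).map τ = 0 when lam s ≠ τ (lam r)
  have cross : ∀ (τ : K ≃ₐ[F] K) s r, lam s ≠ τ (lam r) → E s * (E r).map τ = 0 := by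
    intro τ s r hne
    have h1 : E s * Pk = lam s • E s := by
      rw [hdecomp]; exact right_eig lam E horth hidem s
    have h2 : Pk * (E r).map τ = τ (lam r) • (E r).map τ := by
      rw [hdecompτ τ]
      exact left_eig (fun t => τ (lam t)) (fun t => (E t).map τ) (horthτ τ) (hidemτ τ) r
    have key : lam s • (E s * (E r).map τ) = τ (lam r) • (E s * (E r).map τ) := by
      calc lam s • (E s * (E r).map τ) = (lam s • E s) * (E r).map τ := by
              rw [smul_mul_assoc]
        _ = E s * Pk * (E r).map τ := by rw [h1]
        _ = E s * (Pk * (E r).map τ) := by rw [mul_assoc]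
        _ = E s * (τ (lam r) • (E r).map τ) := by rw [h2]
        _ = τ (lam r) • (E s * (E r).map τ) := by rw [mul_smul_comm]
    have : (lam s - τ (lam r)) • (E s * (E r).map τ) = 0 := by
      rw [sub_smul, key, sub_self]
    rcases smul_eq_zero.mp this with h | h
    · exact absurd (sub_eq_zero.mp h) hne
    · exact h
  -- main claim: τ maps each E r to some E s
  have main : ∀ (τ : K ≃ₐ[F] K) (r : Fin m), ∃ s, (E r).map τ = E s := by
    intro τ r
    by_cases hex : ∃ s, lam s = τ (lam r)
    · obtain ⟨s, hs⟩ := hex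
      refine ⟨s, ?_⟩
      have h1 : (E r).map τ = E s * (E r).map τ := by
        calc (E r).map τ = 1 * (E r).map τ := (one_mul _).symm
          _ = (∑ t, E t) * (E r).map τ := by rw [hsum]
          _ = ∑ t, E t * (E r).map τ := Finset.sum_mul _ _ _
          _ = E s * (E r).map τ := by
              rw [Finset.sum_eq_single s]
              · intro b _ hb
                refine cross τ b r fun hc => hb ?_
                exact hlam_inj (hc.trans hs.symm)
              · intro h; exact absurd (Finset.mem_univ s) h
      have h2 : E s = E s * (E r).map τ := by
        calc E s = E s * 1 := (mul_one _).symm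
          _ = E s * ∑ t, (E t).map τ := by rw [hsumτ τ]
          _ = ∑ t, E s * (E t).map τ := Finset.mul_sum _ _ _
          _ = E s * (E r).map τ := by
              rw [Finset.sum_eq_single r]
              · intro b _ hb
                refine cross τ s b fun hc => hb ?_
                exact hlam_inj (τ.injective (hc.symm.trans hs))
              · intro h; exact absurd (Finset.mem_univ r) h
      rw [h1, ← h2]
    · push_neg at hex
      have h0 : (E r).map τ = 0 := by
        calc (E r).map τ = 1 * (E r).map τ := (one_mul _).symm
          _ = (∑ t, E t) * (E r).map τ := by rw [hsum]
          _ = ∑ t, E t * (E r).map τ := Finset.sum_mul _ _ _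
          _ = 0 := Finset.sum_eq_zero fun t _ => cross τ t r (hex t)
      have hEr : E r = 0 := map_eq_zero τ _ h0
      exact ⟨r, by rw [h0, hEr]⟩
  refine ⟨main, ?_⟩
  -- second part
  have finDim : FiniteDimensional F K :=
    Polynomial.IsSplittingField.finiteDimensional K P₀.charpoly
  -- distinct nonzero idempotents
  have Edist : ∀ s s', E s = E s' → E s ≠ 0 → s = s' := by
    intro s s' h hne
    by_contra hss
    apply hne
    calc E s = E s * E s := (hidem s).symm
      _ = E s * E s' := by rw [← h]
      _ = 0 := horth s s' hss
  intro x y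
  have hfixed : ∀ τ : K ≃ₐ[F] K,
      τ ((∑ r, (E r).hadamard (E r)) x y) = (∑ r, (E r).hadamard (E r)) x y := by
    intro τ
    have expand : (∑ r, (E r).hadamard (E r)) x y = ∑ r, (E r x y) * (E r x y) := by
      simp [Matrix.sum_apply, Matrix.hadamard_apply]
    rw [expand, map_sum]
    simp only [_root_.map_mul]
    -- restrict to nonzero idempotents
    set S : Finset (Fin m) := Finset.univ.filter (fun r => E r ≠ 0) with hS
    have restrict : ∀ (f : Fin m → Matrix (Fin n) (Fin n) K),
        (∀ r, E r = 0 → f r = 0) → ∑ r, f r x y = ∑ r ∈ S, f r x y := by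
      intro f hf
      rw [Finset.sum_filter]
      refine Finset.sum_congr rfl fun r _ => ?_
      by_cases h : E r = 0
      · simp [h, hf r h]
      · simp [h]
    have lhs_eq : (∑ r, τ (E r x y) * τ (E r x y)) =
        ∑ r ∈ S, ((E r).map τ x y) * ((E r).map τ x y) := by
      have := restrict (fun r => ((E r).map τ).hadamard ((E r).map τ)) (by
        intro r h; ext a b; simp [h, Matrix.map_apply, Matrix.hadamard_apply])
      simp only [Matrix.hadamard_apply] at this
      simpa [Matrix.map_apply] using this
    have rhs_eq : (∑ r, (E r x y) * (E r x y)) = ∑ r ∈ S, (E r x y) * (E r x y) := by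
      have := restrict (fun r => (E r).hadamard (E r)) (by
        intro r h; ext a b; simp [h, Matrix.hadamard_apply])
      simpa [Matrix.hadamard_apply] using this
    rw [lhs_eq, rhs_eq]
    -- the permutation argument
    have mapsS : ∀ r ∈ S, (main τ r).choose ∈ S := by
      intro r hr
      have h := (main τ r).choose_spec
      simp only [hS, Finset.mem_filter, Finset.mem_univ, true_and] at hr ⊢
      intro h0
      apply hr
      exact map_eq_zero τ _ (h.trans h0)
    refine Finset.sum_bij (fun r _ => (main τ r).choose) mapsS ?_ ?_ ?_
    · -- injectivity
      intro r hr r' hr' heq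
      have h1 := (main τ r).choose_spec
      have h2 := (main τ r').choose_spec
      have heq' : (main τ r).choose = (main τ r').choose := heq
      have : (E r).map τ = (E r').map τ := by rw [h1, h2, heq']
      have hEE : E r = E r' := by
        ext a b
        have := congrFun (congrFun this a) b
        simp only [Matrix.map_apply] at this
        exact τ.injective this
      simp only [hS, Finset.mem_filter, Finset.mem_univ, true_and] at hr
      exact Edist r r' hEE hr
    · -- surjectivity
      intro s hs
      simp only [hS, Finset.mem_filter, Finset.mem_univ, true_and] at hs
      obtain ⟨r, hr⟩ := main τ.symm s
      have hrS : r ∈ S := by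
        simp only [hS, Finset.mem_filter, Finset.mem_univ, true_and]
        intro h0
        exact hs (map_eq_zero τ.symm _ (hr.trans h0))
      refine ⟨r, hrS, ?_⟩
      have hback : (E r).map τ = E s := by
        rw [← hr]
        ext a b
        simp [Matrix.map_apply]
      have h1 := (main τ r).choose_spec
      refine Edist _ _ (h1.symm.trans hback) ?_
      rw [h1.symm.trans hback]; exact hs
    · -- values agree
      intro r hr
      have h1 := (main τ r).choose_spec
      rw [← h1]
  -- conclude via the Galois correspondence
  have h2 : (∑ r, (E r).hadamard (E r)) x y ∈
      IntermediateField.fixedField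
        (IntermediateField.fixingSubgroup (⊥ : IntermediateField F K)) := by
    intro g; exact hfixed g.1
  rw [IsGalois.fixedField_fixingSubgroup, IntermediateField.mem_bot] at h2
  exact h2
end

section
/- Let U = R(2SS* − I) be the Szegedy walk of a Markov chain with discriminant D = Σ_λ cos(θ_λ) E_λ. For an eigenvalue λ = cos(θ_λ) ∉ {1,−1} of D, the matrix F_λ⁺ := (1/(2 sin²θ_λ))(S − e^{iθ_λ}RS) E_λ (S − e^{iθ_λ}RS)* is an idempotent Hermitian matrix satisfying U F_λ⁺ = e^{iθ_λ} F_λ⁺, i.e., F_λ⁺ projects onto a subspace of the e^{iθ_λ}-eigenspace of U. -/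
open Matrix BigOperators

/-- For the Szegedy walk `U = R(2SS* − I)` of a Markov chain with
discriminant `D`, and an eigenvalue `λ = cos θ ∉ {1, −1}` of `D` (so `sin θ ≠ 0`)
with spectral projection `E`, the matrix
`F⁺ = (1/(2 sin²θ))(S − e^{iθ}RS) E (S − e^{iθ}RS)*` is an idempotent Hermitian
matrix with `U F⁺ = e^{iθ} F⁺`, i.e. `F⁺` projects onto a subspace of the
`e^{iθ}`-eigenspace of `U`. -/
theorem szegedy_spectral_idempotent
    (n : ℕ)
    (P : Matrix (Fin n) (Fin n) ℝ)
    (hP_nonneg : ∀ x y, 0 ≤ P x y)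
    (hP_stoch : ∀ x, ∑ y, P x y = 1)
    (S : Matrix (Fin n × Fin n) (Fin n) ℂ)
    (hS : ∀ (p : Fin n × Fin n) (y : Fin n),
      S p y = if p.1 = y then (Real.sqrt (P y p.2) : ℂ) else 0)
    (R : Matrix (Fin n × Fin n) (Fin n × Fin n) ℂ)
    (hR : ∀ p q : Fin n × Fin n, R p q = if p.1 = q.2 ∧ p.2 = q.1 then 1 else 0)
    (U : Matrix (Fin n × Fin n) (Fin n × Fin n) ℂ)
    (hU : U = R * (2 • (S * Sᴴ) - 1))
    (D : Matrix (Fin n) (Fin n) ℝ)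
    (hD : ∀ x y, D x y = Real.sqrt (P x y * P y x))
    (θ : ℝ)
    (hsin : Real.sin θ ≠ 0)
    (E : Matrix (Fin n) (Fin n) ℂ)
    (hherm : Eᴴ = E)
    (hidem : E * E = E)
    (hDE : (D.map Complex.ofReal) * E = (Real.cos θ : ℂ) • E)
    (hED : E * (D.map Complex.ofReal) = (Real.cos θ : ℂ) • E)
    (Fp : Matrix (Fin n × Fin n) (Fin n × Fin n) ℂ)
    (hFp : Fp = ((1 : ℂ) / (2 * (Real.sin θ : ℂ) ^ 2)) •
      ((S - Complex.exp (θ * Complex.I) • (R * S)) * E *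
        (S - Complex.exp (θ * Complex.I) • (R * S))ᴴ)) :
    Fp * Fp = Fp ∧ Fpᴴ = Fp ∧ U * Fp = Complex.exp (θ * Complex.I) • Fp := by
  
  -- notation
  set e : ℂ := Complex.exp (θ * Complex.I) with he_def
  set e' : ℂ := Complex.exp (-(θ * Complex.I)) with he'_def
  set D' : Matrix (Fin n) (Fin n) ℂ := D.map Complex.ofReal with hD'_def
  set A : Matrix (Fin n × Fin n) (Fin n) ℂ := S - e • (R * S) with hA_def
  set c : ℂ := (1 : ℂ) / (2 * (Real.sin θ : ℂ) ^ 2) with hc_def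
  -- scalar facts
  have hee : e' * e = 1 := by
    rw [he_def, he'_def, ← Complex.exp_add, neg_add_cancel, Complex.exp_zero]
  have hstar_e : star e = e' := by
    rw [he_def, he'_def, Complex.star_def, ← Complex.exp_conj]
    congr 1
    simp [Complex.conj_ofReal]
  have hcos : e + e' = 2 * (Real.cos θ : ℂ) := by
    rw [Complex.ofReal_cos, Complex.cos, he_def, he'_def]
    ring_nf
  have hsinC : ((Real.sin θ : ℂ)) ≠ 0 := by
    exact_mod_cast Complex.ofReal_ne_zero.mpr hsin
  have h2sin : (2 : ℂ) * (Real.sin θ : ℂ) ^ 2 ≠ 0 :=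
    mul_ne_zero two_ne_zero (pow_ne_zero 2 hsinC)
  have hc2sin : c * ((2 : ℂ) * (Real.sin θ : ℂ) ^ 2) = 1 := by
    rw [hc_def, one_div, inv_mul_cancel₀ h2sin]
  have hstarc : star c = c := by
    have hcr : c = ((1 / (2 * Real.sin θ ^ 2) : ℝ) : ℂ) := by rw [hc_def]; push_cast; ring
    rw [hcr, Complex.star_def, Complex.conj_ofReal]
  have hsin2 : (2 : ℂ) - (e + e') * (Real.cos θ : ℂ) = 2 * (Real.sin θ : ℂ) ^ 2 := by
    rw [hcos]
    have := Real.sin_sq θ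
    have h2 : ((Real.sin θ : ℂ)) ^ 2 = 1 - ((Real.cos θ : ℂ)) ^ 2 := by
      exact_mod_cast congrArg (Complex.ofReal) this
    rw [h2]; ring
  -- entrywise matrix facts
  have hSS : Sᴴ * S = 1 := by
    ext x y
    simp only [Matrix.mul_apply, conjTranspose_apply, hS, one_apply, Fintype.sum_prod_type,
      apply_ite (star : ℂ → ℂ), star_zero, Complex.star_def, Complex.conj_ofReal,
      ite_mul, mul_ite, zero_mul, mul_zero, ← ite_and]
    by_cases h : x = y
    · subst h
      simp only [and_self, if_pos rfl]
      rw [Finset.sum_comm]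
      simp only [Finset.sum_ite_eq', Finset.mem_univ, if_true]
      simp only [← Complex.ofReal_mul, ← Complex.ofReal_sum]
      norm_cast
      rw [Finset.sum_congr rfl fun b _ => Real.mul_self_sqrt (hP_nonneg x b), hP_stoch]
    · rw [if_neg h]
      refine Finset.sum_eq_zero fun a _ => Finset.sum_eq_zero fun b _ => ?_
      rw [if_neg]
      rintro ⟨rfl, rfl⟩; exact h rfl
  have hcond : ∀ (r p : Fin n × Fin n), (p.1 = r.2 ∧ p.2 = r.1) ↔ r = (p.2, p.1) := by
    rintro ⟨a, b⟩ ⟨c, d⟩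
    simp [Prod.ext_iff, and_comm, eq_comm]
  have hRmul : ∀ (M : Matrix (Fin n × Fin n) (Fin n) ℂ) p q, (R * M) p q = M (p.2, p.1) q := by
    intro M p q
    simp only [Matrix.mul_apply, hR, ite_mul, zero_mul, one_mul]
    rw [Finset.sum_congr rfl fun r _ => by rw [if_congr (hcond r p) rfl rfl]]
    simp [Finset.sum_ite_eq']
  have hRR : R * R = 1 := by
    ext p q
    simp only [Matrix.mul_apply, hR, ite_mul, zero_mul, one_mul]
    rw [Finset.sum_congr rfl fun r _ => by rw [if_congr (hcond r p) rfl rfl]]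
    simp only [Finset.sum_ite_eq', Finset.mem_univ, if_true, one_apply, hR]
    congr 1
    simp [Prod.ext_iff, and_comm, eq_comm]
  have hRH : Rᴴ = R := by
    ext p q
    simp only [conjTranspose_apply, hR, apply_ite (star : ℂ → ℂ), star_one, star_zero]
    congr 1
    simp [and_comm, eq_comm]
  have hSRS : Sᴴ * (R * S) = D' := by
    ext x y
    simp only [Matrix.mul_apply, conjTranspose_apply, hRmul, hS, hD'_def, map_apply, hD,
      Fintype.sum_prod_type, apply_ite (star : ℂ → ℂ), star_zero, Complex.star_def,
      Complex.conj_ofReal, ite_mul, mul_ite, zero_mul, mul_zero]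
    simp only [Finset.sum_ite_eq', Finset.mem_univ, if_true]
    rw [← Complex.ofReal_mul, Real.sqrt_mul (hP_nonneg x y)]
  have hRSH : (R * S)ᴴ = Sᴴ * R := by rw [conjTranspose_mul, hRH]
  have hRSS : (R * S)ᴴ * S = D' := by rw [hRSH, Matrix.mul_assoc, hSRS]
  have hRSRS : (R * S)ᴴ * (R * S) = 1 := by
    rw [hRSH, Matrix.mul_assoc, ← Matrix.mul_assoc R R S, hRR, Matrix.one_mul, hSS]
  -- A computations
  have hAH : Aᴴ = Sᴴ - e' • (R * S)ᴴ := by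
    rw [hA_def, conjTranspose_sub, conjTranspose_smul, hstar_e]
  have hAA : Aᴴ * A = (2 : ℂ) • (1 : Matrix (Fin n) (Fin n) ℂ) - (e + e') • D' := by
    rw [hAH, hA_def]
    rw [Matrix.sub_mul, Matrix.mul_sub, Matrix.mul_sub, Matrix.smul_mul, Matrix.smul_mul,
      Matrix.mul_smul, Matrix.mul_smul, hSS, hSRS, hRSS, hRSRS]
    simp only [smul_smul]
    rw [hee]
    module
  have hEAE : E * (Aᴴ * A) * E = ((2 : ℂ) * (Real.sin θ : ℂ) ^ 2) • E := by
    rw [hAA, Matrix.mul_sub, Matrix.sub_mul, Matrix.mul_smul, Matrix.mul_one,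
      Matrix.smul_mul, Matrix.mul_smul, Matrix.smul_mul, Matrix.mul_assoc, hDE,
      Matrix.mul_smul, hidem]
    rw [smul_smul, ← sub_smul, hsin2]
  -- the three conclusions
  have hFp' : Fp = c • (A * E * Aᴴ) := hFp
  have hUS : U * S = R * S := by
    rw [hU, Matrix.mul_assoc, Matrix.sub_mul, Matrix.smul_mul, Matrix.one_mul,
      Matrix.mul_assoc, hSS, Matrix.mul_one, two_smul, add_sub_cancel_right]
  have hURS : U * (R * S) = (2 : ℂ) • (R * S * D') - S := by
    rw [hU, Matrix.mul_assoc, Matrix.sub_mul, Matrix.one_mul, Matrix.smul_mul,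
      Matrix.mul_assoc S Sᴴ (R * S), hSRS, Matrix.mul_sub, Matrix.mul_smul,
      ← Matrix.mul_assoc R S D', ← Matrix.mul_assoc R R S, hRR, Matrix.one_mul,
      ← Nat.cast_smul_eq_nsmul ℂ]
    norm_num
  have hUAE : U * (A * E) = e • (A * E) := by
    have hq : (1 : ℂ) - 2 * e * (Real.cos θ : ℂ) = -(e * e) := by
      linear_combination e * hcos - hee
    have expand1 : U * (A * E) =
        ((1 : ℂ) - 2 * e * (Real.cos θ : ℂ)) • ((R * S) * E) + e • (S * E) := by
      rw [← Matrix.mul_assoc, hA_def, Matrix.mul_sub, Matrix.mul_smul, hUS, hURS,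
        Matrix.sub_mul, Matrix.smul_mul, Matrix.sub_mul, Matrix.smul_mul,
        Matrix.mul_assoc (R * S) D' E, hDE, Matrix.mul_smul]
      module
    have expand2 : e • (A * E) = (-(e * e)) • ((R * S) * E) + e • (S * E) := by
      rw [hA_def, Matrix.sub_mul, Matrix.smul_mul]
      module
    rw [expand1, expand2, hq]
  refine ⟨?_, ?_, ?_⟩
  · -- idempotent
    rw [hFp', smul_mul_assoc, mul_smul_comm, smul_smul]
    have assoc : (A * E * Aᴴ) * (A * E * Aᴴ) = A * (E * (Aᴴ * A) * E) * Aᴴ := by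
      simp only [Matrix.mul_assoc]
    rw [assoc, hEAE, Matrix.mul_smul, Matrix.smul_mul, smul_smul, mul_assoc, hc2sin, mul_one]
  · -- hermitian
    rw [hFp', conjTranspose_smul, conjTranspose_mul, conjTranspose_mul,
      conjTranspose_conjTranspose, hherm]
    rw [hstarc, Matrix.mul_assoc]
  · -- eigenvector equation
    rw [hFp', mul_smul_comm, ← Matrix.mul_assoc, hUAE, Matrix.smul_mul,
      smul_smul, smul_smul, mul_comm c e, Matrix.mul_assoc]
end
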